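/- arXiv:math/0605211 — 8 statements merged into one kernel-verified Lean document; each statement's English description precedes it below -/
import Mathlib

section
/- Let X be a geodesic metric space and 𝓐 a collection of subsets of X. If (X,𝓐) satisfies properties (α1) and (β2), then (X,𝓐) satisfies the uniform quasi-convexity property (Q); moreover (Q) holds with the constant K₀ equal to the constant M appearing in (β2). -/
open Set Metric

/-! ### Basic metric notions: tubular neighborhoods, geodesics -/

variable {X : Type*} [MetricSpace X]

/-- Open `δ`-tubular neighborhood of a subset. -/
def tubN (δ : ℝ) (A : Set X) : Set X := {x | Metric.infDist x A < δ}

/-- Closed `δ`-tubular neighborhood of a subset. -/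
def ctubN (δ : ℝ) (A : Set X) : Set X := {x | Metric.infDist x A ≤ δ}

/-- `γ` parametrizes a geodesic of length `ℓ` (an isometric embedding of `[0,ℓ]`). -/
def IsGeodesicParam (γ : ℝ → X) (ℓ : ℝ) : Prop :=
  0 ≤ ℓ ∧ ∀ s ∈ Set.Icc (0:ℝ) ℓ, ∀ t ∈ Set.Icc (0:ℝ) ℓ, dist (γ s) (γ t) = |s - t|

/-- A metric space is geodesic if every two points are joined by a geodesic. -/
def GeodesicSpace (X : Type*) [MetricSpace X] : Prop :=
  ∀ x y : X, ∃ (γ : ℝ → X) (ℓ : ℝ), IsGeodesicParam γ ℓ ∧ γ 0 = x ∧ γ ℓ = y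

/-- The cyclic successor of an index in `Fin k`. -/
def finCycSucc {k : ℕ} (i : Fin k) : Fin k := ⟨(i.val + 1) % k, Nat.mod_lt _ i.pos⟩

/-! ### Polygons -/

/-- The data of a `k`-gon: `k` parametrized paths with their lengths. -/
structure PrePolygon (X : Type*) (k : ℕ) where
  edge : Fin k → ℝ → X
  len : Fin k → ℝ

namespace PrePolygon

variable {k : ℕ}

/-- The `i`-th edge, as a subset. -/
def edgeSet (P : PrePolygon X k) (i : Fin k) : Set X := P.edge i '' Set.Icc 0 (P.len i)

/-- The polygon, as a subset (union of its edges). -/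
def carrier (P : PrePolygon X k) : Set X := ⋃ i, P.edgeSet i

/-- The `i`-th vertex (the origin of the `i`-th edge). -/
def vertex (P : PrePolygon X k) (i : Fin k) : X := P.edge i 0

/-- The union `O_x` of the edges not adjacent to the `i`-th vertex. -/
def opp (P : PrePolygon X k) (i : Fin k) : Set X :=
  ⋃ j ∈ {j : Fin k | j ≠ i ∧ finCycSucc j ≠ i}, P.edgeSet j

/-- The edges close up cyclically (the endpoint of each edge is the origin of the next). -/
def IsClosedPolygon (P : PrePolygon X k) : Prop :=
  (∀ i, 0 ≤ P.len i) ∧ ∀ i, P.edge i (P.len i) = P.edge (finCycSucc i) 0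

/-- A geodesic `k`-gon. -/
def IsGeodesicPolygon (P : PrePolygon X k) : Prop :=
  P.IsClosedPolygon ∧ ∀ i, IsGeodesicParam (P.edge i) (P.len i)

/-- The polygon is `(θ,σ,ν)`-fat:  (F1) every point of an edge at distance at least `σθ`
from both endpoints of the edge is at distance at least `θ` from the rest of the polygon;
(F2) every vertex is at distance at least `νθ` from the union of the non-adjacent edges. -/
def IsFat (P : PrePolygon X k) (θ σ ν : ℝ) : Prop :=
  (∀ i : Fin k, ∀ p ∈ P.edgeSet i,
      σ * θ ≤ dist p (P.edge i 0) → σ * θ ≤ dist p (P.edge i (P.len i)) →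
      θ ≤ Metric.infDist p (P.carrier \ P.edgeSet i)) ∧
  (∀ i : Fin k, ν * θ ≤ Metric.infDist (P.vertex i) (P.opp i))

/-- `(θ,ν)`-fat means `(θ,2,ν)`-fat. -/
def IsFat2 (P : PrePolygon X k) (θ ν : ℝ) : Prop := P.IsFat θ 2 ν

end PrePolygon

/-! ### Gromov hyperbolicity (thin triangles) -/

/-- A geodesic metric space is Gromov hyperbolic if there is `δ ≥ 0` such that every geodesic
triangle is `δ`-thin: each side lies in the closed `δ`-neighborhood of the other two sides. -/
def GromovHyperbolic (X : Type*) [MetricSpace X] : Prop :=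
  ∃ δ : ℝ, 0 ≤ δ ∧ ∀ T : PrePolygon X 3, T.IsGeodesicPolygon →
    ∀ i : Fin 3, ∀ p ∈ T.edgeSet i,
      Metric.infDist p (T.edgeSet (finCycSucc i) ∪ T.edgeSet (finCycSucc (finCycSucc i))) ≤ δ

/-! ### The Druţu–Sapir properties of a pair `(X, 𝓐)` -/

/-- Property (α₁): uniformly bounded intersections of tubular neighborhoods. -/
def Alpha1 (𝓐 : Set (Set X)) : Prop :=
  ∀ δ : ℝ, 0 < δ → ∃ D : ℝ, ∀ A ∈ 𝓐, ∀ A' ∈ 𝓐, A ≠ A' →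
    ∀ x ∈ tubN δ A ∩ tubN δ A', ∀ y ∈ tubN δ A ∩ tubN δ A', dist x y ≤ D

/-- Property (α₂) with given constants `ε`, `M`. -/
def Alpha2With (𝓐 : Set (Set X)) (ε M : ℝ) : Prop :=
  ∀ (γ : ℝ → X) (ℓ : ℝ), IsGeodesicParam γ ℓ → ∀ A ∈ 𝓐,
    γ 0 ∈ tubN (ε * ℓ) A → γ ℓ ∈ tubN (ε * ℓ) A →
    ∃ t ∈ Set.Icc (0:ℝ) ℓ, γ t ∈ tubN M A

/-- Property (α₂). -/
def Alpha2 (𝓐 : Set (Set X)) : Prop :=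
  ∃ ε M : ℝ, 0 ≤ ε ∧ ε < 1/2 ∧ 0 < M ∧ Alpha2With 𝓐 ε M

/-- Property (α₃): fat geodesic `k`-gons lie in tubular neighborhoods of pieces. -/
def Alpha3 (𝓐 : Set (Set X)) : Prop :=
  ∀ k : ℕ, 2 ≤ k → ∃ θ : ℝ, 0 < θ ∧ ∃ ν : ℝ, 8 ≤ ν ∧ ∃ χ : ℝ, 0 < χ ∧
    ∀ P : PrePolygon X k, P.IsGeodesicPolygon → P.IsFat2 θ ν →
      ∃ A ∈ 𝓐, P.carrier ⊆ tubN χ A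

/-- Property (β₂) with given constants `ε`, `M`: middle thirds of geodesics with endpoints
close to a piece stay close to the piece. -/
def Beta2With (𝓐 : Set (Set X)) (ε M : ℝ) : Prop :=
  ∀ (γ : ℝ → X) (ℓ : ℝ), IsGeodesicParam γ ℓ → ∀ A ∈ 𝓐,
    γ 0 ∈ tubN (ε * ℓ) A → γ ℓ ∈ tubN (ε * ℓ) A →
    ∀ t ∈ Set.Icc (ℓ/3) (2*ℓ/3), γ t ∈ tubN M A

/-- Property (β₂). -/
def Beta2 (𝓐 : Set (Set X)) : Prop := ∃ ε M : ℝ, 0 < ε ∧ 0 ≤ M ∧ Beta2With 𝓐 ε M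

/-- Property (β₃) with given constants: fat geodesic hexagons lie in tubular
neighborhoods of pieces. -/
def Beta3With (𝓐 : Set (Set X)) (θ ν χ : ℝ) : Prop :=
  ∀ P : PrePolygon X 6, P.IsGeodesicPolygon → P.IsFat2 θ ν → ∃ A ∈ 𝓐, P.carrier ⊆ tubN χ A

/-- Property (β₃). -/
def Beta3 (𝓐 : Set (Set X)) : Prop :=
  ∃ θ : ℝ, 0 < θ ∧ ∃ ν : ℝ, 8 ≤ ν ∧ ∃ χ : ℝ, 0 < χ ∧ Beta3With 𝓐 θ ν χ

/-- Property (Q), uniform quasi-convexity of pieces, with given constants `t`, `K₀`. -/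
def PropQWith (𝓐 : Set (Set X)) (t K₀ : ℝ) : Prop :=
  ∀ A ∈ 𝓐, ∀ K : ℝ, K₀ ≤ K → ∀ (γ : ℝ → X) (ℓ : ℝ), IsGeodesicParam γ ℓ →
    γ 0 ∈ tubN K A → γ ℓ ∈ tubN K A → ∀ s ∈ Set.Icc (0:ℝ) ℓ, γ s ∈ tubN (t * K) A

/-- Property (Q), uniform quasi-convexity of pieces. -/
def PropQ (𝓐 : Set (Set X)) : Prop :=
  ∃ t : ℝ, 0 < t ∧ ∃ K₀ : ℝ, 0 ≤ K₀ ∧ PropQWith 𝓐 t K₀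

/-- `X` is asymptotically tree-graded with respect to `𝓐` (Druţu–Sapir metric
characterization, taken as the definition): (α₁), (α₂) and (α₃) hold. -/
def ATG (𝓐 : Set (Set X)) : Prop := Alpha1 𝓐 ∧ Alpha2 𝓐 ∧ Alpha3 𝓐

/-! ### Entrance and exit points, almost geodesics, the (*) property -/

/-- The entrance point of the path `p : [0,ℓ] → X` in the set `S`. -/
noncomputable def entrancePoint (p : ℝ → X) (ℓ : ℝ) (S : Set X) : X :=
  p (sInf {t | t ∈ Set.Icc (0:ℝ) ℓ ∧ p t ∈ S})

/-- The exit point of the path `p : [0,ℓ] → X` from the set `S`. -/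
noncomputable def exitPoint (p : ℝ → X) (ℓ : ℝ) (S : Set X) : X :=
  p (sSup {t | t ∈ Set.Icc (0:ℝ) ℓ ∧ p t ∈ S})

/-- `q` is a `(1,C)`-almost geodesic on `[0,ℓ]`: a `1`-Lipschitz `(1,C)`-quasi-geodesic. -/
def IsAlmostGeodesic (C : ℝ) (q : ℝ → X) (ℓ : ℝ) : Prop :=
  0 ≤ ℓ ∧ ∀ s ∈ Set.Icc (0:ℝ) ℓ, ∀ t ∈ Set.Icc (0:ℝ) ℓ,
    |s - t| - C ≤ dist (q s) (q t) ∧ dist (q s) (q t) ≤ |s - t|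

/-- The `(*)` alternative for triangles with `(1,C)`-almost geodesic edges,
with constants `σ`, `δ`. -/
def StarATGWith (𝓐 : Set (Set X)) (C σ δ : ℝ) : Prop :=
  ∀ T : PrePolygon X 3, T.IsClosedPolygon →
    (∀ i, IsAlmostGeodesic C (T.edge i) (T.len i)) →
    (∃ a : X, ∀ i : Fin 3, (Metric.closedBall a σ ∩ T.edgeSet i).Nonempty) ∨
    (∃ A ∈ 𝓐, (∀ i : Fin 3, (ctubN σ A ∩ T.edgeSet i).Nonempty) ∧
      ∀ i : Fin 3, dist (exitPoint (T.edge i) (T.len i) (ctubN σ A))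
        (entrancePoint (T.edge (finCycSucc i)) (T.len (finCycSucc i)) (ctubN σ A)) < δ)

/-- `X` is `(*)`-asymptotically tree-graded with respect to `𝓐`. -/
def StarATG (𝓐 : Set (Set X)) : Prop :=
  ∀ C : ℝ, 0 ≤ C → ∃ σ δ : ℝ, StarATGWith 𝓐 C σ δ


private lemma tub_mono' {A : Set X} {a b : ℝ} (hab : a ≤ b) {x : X} (hx : x ∈ tubN a A) :
    x ∈ tubN b A := lt_of_lt_of_le hx hab

private lemma short_aux {ε K : ℝ} (hε : 0 < ε) {A : Set X} (γ : ℝ → X) (ℓ : ℝ)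
    (hγ : IsGeodesicParam γ ℓ) (hlen : ℓ ≤ 3 * K / ε) (h0 : γ 0 ∈ tubN K A) :
    ∀ s ∈ Set.Icc (0:ℝ) ℓ, γ s ∈ tubN ((1 + 3/ε) * K) A := by
  intro s hs
  have hd : dist (γ s) (γ 0) = |s - 0| := hγ.2 s hs 0 ⟨le_refl 0, hγ.1⟩
  have h1 : Metric.infDist (γ s) A ≤ dist (γ s) (γ 0) + Metric.infDist (γ 0) A :=
    (Metric.infDist_le_infDist_add_dist).trans (by rw [add_comm])
  have h0' : Metric.infDist (γ 0) A < K := h0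
  have habs : |s - 0| = s := by
    rw [sub_zero, abs_of_nonneg hs.1]
  have hsl : s ≤ ℓ := hs.2
  have hkey : (1 + 3/ε) * K = 3 * K / ε + K := by field_simp; ring
  show Metric.infDist (γ s) A < (1 + 3/ε) * K
  rw [hkey]
  calc Metric.infDist (γ s) A ≤ dist (γ s) (γ 0) + Metric.infDist (γ 0) A := h1
    _ = s + Metric.infDist (γ 0) A := by rw [hd, habs]
    _ < s + K := by linarith
    _ ≤ 3 * K / ε + K := by linarith

private lemma quasi_aux {𝓐 : Set (Set X)} {ε M : ℝ} (hε : 0 < ε)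
    (h2 : Beta2With 𝓐 ε M) {A : Set X} (hA : A ∈ 𝓐) {K : ℝ} (hMK : M ≤ K) :
    ∀ n : ℕ, ∀ γ : ℝ → X, ∀ ℓ : ℝ, IsGeodesicParam γ ℓ →
      ℓ ≤ 3 ^ n * (3 * K / ε) → γ 0 ∈ tubN K A → γ ℓ ∈ tubN K A →
      ∀ s ∈ Set.Icc (0:ℝ) ℓ, γ s ∈ tubN ((1 + 3/ε) * K) A := by
  intro n
  induction n with
  | zero =>
    intro γ ℓ hγ hlen h0 hℓ s hs
    exact short_aux hε γ ℓ hγ (by simpa using hlen) h0 s hs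
  | succ n ih =>
    intro γ ℓ hγ hlen h0 hℓ s hs
    by_cases hcase : ℓ ≤ 3 * K / ε
    · exact short_aux hε γ ℓ hγ hcase h0 s hs
    · push_neg at hcase
      have hK : 0 < K := lt_of_le_of_lt Metric.infDist_nonneg h0
      have hKε : 0 < 3 * K / ε := by positivity
      have hℓpos : 0 < ℓ := lt_trans hKε hcase
      have hKεℓ : K < ε * ℓ := by
        have h3K : 3 * K < ε * ℓ := by
          rw [div_lt_iff₀ hε] at hcase; nlinarith
        linarith
      have hmid := h2 γ ℓ hγ A hA (tub_mono' hKεℓ.le h0) (tub_mono' hKεℓ.le hℓ)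
      have hlen' : ℓ / 3 ≤ 3 ^ n * (3 * K / ε) := by
        have hps : (3:ℝ) ^ (n+1) * (3 * K / ε) = 3 * (3 ^ n * (3 * K / ε)) := by
          rw [pow_succ]; ring
        rw [hps] at hlen; linarith
      have hKt : K ≤ (1 + 3/ε) * K := by nlinarith [div_nonneg (by norm_num : (0:ℝ) ≤ 3) hε.le]
      rcases le_or_gt s (ℓ/3) with hs1 | hs1
      · -- first third
        have hγ' : IsGeodesicParam γ (ℓ/3) :=
          ⟨by linarith, fun u hu v hv =>
            hγ.2 u ⟨hu.1, by linarith [hu.2]⟩ v ⟨hv.1, by linarith [hv.2]⟩⟩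
        have hend : γ (ℓ/3) ∈ tubN K A :=
          lt_of_lt_of_le (hmid (ℓ/3) ⟨le_refl _, by linarith⟩) hMK
        exact ih γ (ℓ/3) hγ' hlen' h0 hend s ⟨hs.1, hs1⟩
      · rcases le_or_gt s (2*ℓ/3) with hs2 | hs2
        · -- middle third
          exact lt_of_lt_of_le (hmid s ⟨hs1.le, hs2⟩) (le_trans hMK hKt)
        · -- last third
          set γ₂ : ℝ → X := fun u => γ (u + 2*ℓ/3) with hγ₂def
          have hγ₂ : IsGeodesicParam γ₂ (ℓ/3) := by
            refine ⟨by linarith, fun u hu v hv => ?_⟩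
            have := hγ.2 (u + 2*ℓ/3) ⟨by linarith [hu.1], by linarith [hu.2]⟩
              (v + 2*ℓ/3) ⟨by linarith [hv.1], by linarith [hv.2]⟩
            simp only [hγ₂def]
            rw [this]; congr 1; ring
          have h20 : γ₂ 0 ∈ tubN K A := by
            show γ (0 + 2*ℓ/3) ∈ tubN K A
            rw [show (0:ℝ) + 2*ℓ/3 = 2*ℓ/3 by ring]
            exact lt_of_lt_of_le (hmid (2*ℓ/3) ⟨by linarith, le_refl _⟩) hMK
          have h2ℓ : γ₂ (ℓ/3) ∈ tubN K A := by
            show γ (ℓ/3 + 2*ℓ/3) ∈ tubN K A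
            rw [show ℓ/3 + 2*ℓ/3 = ℓ by ring]
            exact hℓ
          have := ih γ₂ (ℓ/3) hγ₂ hlen' h20 h2ℓ (s - 2*ℓ/3)
            ⟨by linarith, by linarith [hs.2]⟩
          show γ s ∈ tubN ((1 + 3/ε) * K) A
          rw [show s = (s - 2*ℓ/3) + 2*ℓ/3 by ring]
          exact this

/-- **Lemma.** Properties (α₁) and (β₂) imply the uniform quasi-convexity property (Q),
with the constant `K₀` equal to the constant `M` of (β₂). -/
theorem propQ_of_alpha1_beta2 (hX : GeodesicSpace X) (𝓐 : Set (Set X))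
    (h1 : Alpha1 𝓐) (ε M : ℝ) (hε : 0 < ε) (hM : 0 ≤ M)
    (h2 : Beta2With 𝓐 ε M) :
    ∃ t : ℝ, 0 < t ∧ PropQWith 𝓐 t M := by
  refine ⟨1 + 3/ε, by positivity, ?_⟩
  intro A hA K hK γ ℓ hγ h0 hℓ s hs
  have hKpos : 0 < K := lt_of_le_of_lt Metric.infDist_nonneg h0
  have hpos : 0 < 3 * K / ε := by positivity
  obtain ⟨n, hn⟩ := pow_unbounded_of_one_lt (ℓ / (3 * K / ε)) (by norm_num : (1:ℝ) < 3)
  have hlen : ℓ ≤ 3 ^ n * (3 * K / ε) := le_of_lt ((div_lt_iff₀ hpos).mp hn)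
  exact quasi_aux hε h2 hA hK n γ ℓ hγ hlen h0 hℓ s hs
end

section
/- Let X be a geodesic metric space and 𝓐 a collection of subsets satisfying property (α2) with constants ε ∈ (0,1/2) and M > 0. Let μ ≥ ν ≥ M, let γ be a geodesic and A ∈ 𝓐 such that γ intersects N̄_ν(A). If e_μ and e_ν are the entrance points of γ into N̄_μ(A) and N̄_ν(A) respectively, then dist(e_μ, e_ν) ≤ μ/ε. -/
open Set Metric

/-! ### Basic metric notions: tubular neighborhoods, geodesics -/

variable {X : Type*} [MetricSpace X]

/-- **Lemma.** Assume `(X,𝓐)` satisfies (α₂) with constants `ε ∈ (0,1/2)` and `M > 0`.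
Let `μ ≥ ν ≥ M`, let `γ` be a geodesic and `A ∈ 𝓐` such that `γ` meets the closed
`ν`-neighborhood of `A`.  Then the entrance points of `γ` into the closed `μ`- and
`ν`-neighborhoods of `A` are at distance at most `μ/ε`. -/
theorem entrance_points_close (hX : GeodesicSpace X) (𝓐 : Set (Set X))
    (ε M : ℝ) (hε0 : 0 < ε) (hε : ε < 1/2) (hM : 0 < M)
    (hα2 : Alpha2With 𝓐 ε M)
    (μ ν : ℝ) (hν : M ≤ ν) (hμ : ν ≤ μ)
    (γ : ℝ → X) (ℓ : ℝ) (hγ : IsGeodesicParam γ ℓ)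
    (A : Set X) (hA : A ∈ 𝓐)
    (hint : ∃ t ∈ Set.Icc (0:ℝ) ℓ, γ t ∈ ctubN ν A) :
    dist (entrancePoint γ ℓ (ctubN μ A)) (entrancePoint γ ℓ (ctubN ν A)) ≤ μ / ε := by
  obtain ⟨hℓ0, hiso⟩ := hγ
  set Sν : Set ℝ := {t | t ∈ Set.Icc (0:ℝ) ℓ ∧ γ t ∈ ctubN ν A} with hSνdef
  set Sμ : Set ℝ := {t | t ∈ Set.Icc (0:ℝ) ℓ ∧ γ t ∈ ctubN μ A} with hSμdef
  have hsub : Sν ⊆ Sμ := fun t ht => ⟨ht.1, le_trans ht.2 hμ⟩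
  have hνne : Sν.Nonempty := by
    obtain ⟨t, ht, h⟩ := hint; exact ⟨t, ht, h⟩
  have hμne : Sμ.Nonempty := hνne.mono hsub
  have hbddν : BddBelow Sν := ⟨0, fun t ht => ht.1.1⟩
  have hbddμ : BddBelow Sμ := ⟨0, fun t ht => ht.1.1⟩
  set tμ := sInf Sμ with htμdef
  set tν := sInf Sν with htνdef
  have htμν : tμ ≤ tν := csInf_le_csInf hbddμ hνne hsub
  obtain ⟨t₀, ht₀⟩ := hνne
  have htν0 : (0:ℝ) ≤ tν := le_csInf ⟨t₀, ht₀⟩ (fun t ht => ht.1.1)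
  have htμ0 : (0:ℝ) ≤ tμ := le_csInf hμne (fun t ht => ht.1.1)
  have htνℓ : tν ≤ ℓ := (csInf_le hbddν ht₀).trans ht₀.1.2
  have htμℓ : tμ ≤ ℓ := htμν.trans htνℓ
  -- 1-Lipschitz estimate for infDist along the geodesic
  have hfLip : ∀ s ∈ Set.Icc (0:ℝ) ℓ, ∀ t ∈ Set.Icc (0:ℝ) ℓ,
      Metric.infDist (γ s) A ≤ Metric.infDist (γ t) A + |s - t| := by
    intro s hs t ht
    have := Metric.infDist_le_infDist_add_dist (x := γ s) (y := γ t) (s := A)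
    rwa [hiso s hs t ht] at this
  -- value of infDist at the infimum of such a set
  have key : ∀ (S : Set ℝ) (c : ℝ), S.Nonempty →
      (∀ t ∈ S, t ∈ Set.Icc (0:ℝ) ℓ ∧ Metric.infDist (γ t) A ≤ c) →
      Metric.infDist (γ (sInf S)) A ≤ c := by
    intro S c hSne hS
    have hbdd : BddBelow S := ⟨0, fun t ht => (hS t ht).1.1⟩
    have hT0 : (0:ℝ) ≤ sInf S := le_csInf hSne (fun t ht => (hS t ht).1.1)
    obtain ⟨t₁, ht₁⟩ := hSne
    have hTℓ : sInf S ≤ ℓ := (csInf_le hbdd ht₁).trans (hS t₁ ht₁).1.2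
    refine le_of_forall_pos_le_add (fun δ hδ => ?_)
    obtain ⟨t, htS, htlt⟩ := exists_lt_of_csInf_lt ⟨t₁, ht₁⟩ (lt_add_of_pos_right _ hδ)
    have h1 := hfLip (sInf S) ⟨hT0, hTℓ⟩ t (hS t htS).1
    have h2 : |sInf S - t| ≤ δ := by
      rw [abs_sub_le_iff]
      constructor
      · linarith [csInf_le hbdd htS]
      · linarith [htlt]
    linarith [(hS t htS).2]
  have hfμ : Metric.infDist (γ tμ) A ≤ μ := key Sμ μ hμne (fun t ht => ⟨ht.1, ht.2⟩)
  have hfν : Metric.infDist (γ tν) A ≤ ν := key Sν ν ⟨t₀, ht₀⟩ (fun t ht => ⟨ht.1, ht.2⟩)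
  -- main estimate
  have hmain : tν - tμ ≤ μ / ε := by
    by_contra hcon
    push_neg at hcon
    set L := tν - tμ with hLdef
    have hL0 : 0 < L := lt_trans (div_pos (lt_of_lt_of_le hM (hν.trans hμ)) hε0) hcon
    have hμL : μ < ε * L := by
      rw [div_lt_iff₀ hε0] at hcon
      nlinarith
    have hγ' : IsGeodesicParam (fun s => γ (tμ + s)) L := by
      refine ⟨le_of_lt hL0, fun s hs t ht => ?_⟩
      have h1 : tμ + s ∈ Set.Icc (0:ℝ) ℓ := ⟨by linarith [hs.1], by linarith [hs.2]⟩
      have h2 : tμ + t ∈ Set.Icc (0:ℝ) ℓ := ⟨by linarith [ht.1], by linarith [ht.2]⟩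
      rw [hiso _ h1 _ h2]
      congr 1; ring
    have h0mem : (fun s => γ (tμ + s)) 0 ∈ tubN (ε * L) A := by
      show Metric.infDist (γ (tμ + 0)) A < ε * L
      rw [add_zero]; exact lt_of_le_of_lt hfμ hμL
    have hLmem : (fun s => γ (tμ + s)) L ∈ tubN (ε * L) A := by
      show Metric.infDist (γ (tμ + L)) A < ε * L
      have : tμ + L = tν := by rw [hLdef]; ring
      rw [this]
      exact lt_of_le_of_lt (hfν.trans hμ) hμL
    obtain ⟨t, ht, htub⟩ := hα2 _ L hγ' A hA h0mem hLmem
    have htubM : Metric.infDist (γ (tμ + t)) A < M := htub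
    have hmemν : tμ + t ∈ Sν :=
      ⟨⟨by linarith [ht.1], by linarith [ht.2]⟩, le_of_lt (lt_of_lt_of_le htubM hν)⟩
    have hge : tν ≤ tμ + t := csInf_le hbddν hmemν
    have heq : tμ + t = tν := le_antisymm (by linarith [ht.2]) hge
    have hcν : Metric.infDist (γ tν) A < M := heq ▸ htubM
    -- find an earlier point of Sν, contradiction
    set c := Metric.infDist (γ tν) A with hc
    have hh : 0 < ν - c := by linarith
    have htνpos : 0 < tν := by
      have : 0 < L := hL0
      linarith
    set t' := max 0 (tν - (ν - c)) with ht'def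
    have ht'lt : t' < tν := by
      rw [ht'def]; exact max_lt htνpos (by linarith)
    have ht'mem : t' ∈ Set.Icc (0:ℝ) ℓ :=
      ⟨le_max_left _ _, le_trans (le_of_lt ht'lt) htνℓ⟩
    have hdist : |t' - tν| ≤ ν - c := by
      rw [abs_sub_le_iff]
      constructor
      · linarith
      · have : tν - (ν - c) ≤ t' := le_max_right _ _
        linarith
    have hft' : Metric.infDist (γ t') A ≤ ν := by
      have := hfLip t' ht'mem tν ⟨htν0, htνℓ⟩
      linarith
    have : tν ≤ t' := csInf_le hbddν ⟨ht'mem, hft'⟩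
    linarith
  -- conclude
  have heμ : entrancePoint γ ℓ (ctubN μ A) = γ tμ := rfl
  have heν : entrancePoint γ ℓ (ctubN ν A) = γ tν := rfl
  rw [heμ, heν, hiso tμ ⟨htμ0, htμℓ⟩ tν ⟨htν0, htνℓ⟩, abs_sub_comm, abs_of_nonneg (by linarith)]
  exact hmain
end

section
/- Let X be a geodesic metric space that is (*)-asymptotically tree-graded with respect to a collection 𝓐 of subsets, such that (X,𝓐) satisfies property (α2) with constants ε ∈ (0,1/2), M > 0, and such that for each C the constant σ in the (*)-property is at least M. Then for every C ≥ 0 there exist κ ≥ 0 and λ ≥ 0 with the following property: for any two geodesics γ, γ′ with common origin γ₋ = γ′₋ and with dist(γ₊, γ′₊) ≤ C, every point z on γ′ either lies in N̄_κ(γ), or lies in N̄_κ(A) for some A ∈ 𝓐 such that N̄_κ(A) intersects γ; moreover, in the latter case, if e, f and e′, f′ denote the entrance and exit points of γ and of γ′ respectively from N̄_κ(A), then dist(e,e′) ≤ λ and dist(f,f′) ≤ λ. -/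
open Set Metric

/-! ### Basic metric notions: tubular neighborhoods, geodesics -/

variable {X : Type*} [MetricSpace X]

/-!
Put `z = γ'(t)` and let `q` run along `γ'` from `z` to `γ'₊` and then along a geodesic of length
`≤ C` to `γ₊`. Then `q` is a `(1,2C)`-almost geodesic, so (*) applies to the triangle formed by
`γ'|[0,t]`, `q` and `γ` reversed. Every point of `q` lies on `γ'` beyond `z` or within `C` of
`γ'₊`, so a point of `γ'|[0,t]` close to `q` is close to `z`: in case (ℭ) this puts `z` near `γ`,
in case (𝔓) near `A`, and the (*)-estimates make the entrance and exit points of `γ` and `γ'` in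
`N̄_σ(A)` close to each other. Finally (α₂) transfers this from `N̄_σ(A)` to `N̄_κ(A)`: a long
geodesic segment from `N̄_κ(A)` to `N̄_σ(A)` that avoids `N̄_σ(A)` before its end would have both
endpoints `εL`-close to `A` and still miss `N_M(A)`.
-/

def hitTimes {α : Type*} (p : ℝ → α) (ℓ : ℝ) (S : Set α) : Set ℝ := Icc 0 ℓ ∩ p ⁻¹' S

theorem ctubN_mono {A : Set X} {r r' : ℝ} (h : r ≤ r') : ctubN r A ⊆ ctubN r' A :=
  fun _ hx => le_trans hx h

theorem isClosed_ctubN (r : ℝ) (A : Set X) : IsClosed (ctubN r A) :=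
  isClosed_le (continuous_infDist_pt A) continuous_const

section HitTimes

variable {α : Type*} {p : ℝ → α} {ℓ : ℝ} {S : Set α}

theorem entrancePoint_eq (p : ℝ → α) (ℓ : ℝ) (S : Set α) :
    entrancePoint p ℓ S = p (sInf (hitTimes p ℓ S)) := rfl

theorem exitPoint_eq (p : ℝ → α) (ℓ : ℝ) (S : Set α) :
    exitPoint p ℓ S = p (sSup (hitTimes p ℓ S)) := rfl

theorem bddBelow_hitTimes : BddBelow (hitTimes p ℓ S) := bddBelow_Icc.mono inter_subset_left

theorem bddAbove_hitTimes : BddAbove (hitTimes p ℓ S) := bddAbove_Icc.mono inter_subset_left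

theorem hitTimes_nonempty_iff : (hitTimes p ℓ S).Nonempty ↔ (S ∩ p '' Icc 0 ℓ).Nonempty := by
  rw [inter_comm, image_inter_nonempty_iff]; rfl

theorem isClosed_hitTimes [TopologicalSpace α] (hp : ContinuousOn p (Icc 0 ℓ)) (hS : IsClosed S) :
    IsClosed (hitTimes p ℓ S) :=
  hp.preimage_isClosed_of_isClosed isClosed_Icc hS

theorem csInf_hitTimes_mem [TopologicalSpace α] (hp : ContinuousOn p (Icc 0 ℓ)) (hS : IsClosed S)
    (hne : (hitTimes p ℓ S).Nonempty) : sInf (hitTimes p ℓ S) ∈ hitTimes p ℓ S :=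
  (isClosed_hitTimes hp hS).csInf_mem hne bddBelow_hitTimes

theorem csSup_hitTimes_mem [TopologicalSpace α] (hp : ContinuousOn p (Icc 0 ℓ)) (hS : IsClosed S)
    (hne : (hitTimes p ℓ S).Nonempty) : sSup (hitTimes p ℓ S) ∈ hitTimes p ℓ S :=
  (isClosed_hitTimes hp hS).csSup_mem hne bddAbove_hitTimes

theorem entrancePoint_mem [TopologicalSpace α] (hp : ContinuousOn p (Icc 0 ℓ)) (hS : IsClosed S)
    (hne : (hitTimes p ℓ S).Nonempty) : entrancePoint p ℓ S ∈ S ∩ p '' Icc 0 ℓ :=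
  have h := csInf_hitTimes_mem hp hS hne
  ⟨h.2, mem_image_of_mem p h.1⟩

theorem exitPoint_mem [TopologicalSpace α] (hp : ContinuousOn p (Icc 0 ℓ)) (hS : IsClosed S)
    (hne : (hitTimes p ℓ S).Nonempty) : exitPoint p ℓ S ∈ S ∩ p '' Icc 0 ℓ :=
  have h := csSup_hitTimes_mem hp hS hne
  ⟨h.2, mem_image_of_mem p h.1⟩

theorem exitPoint_of_mem (hℓ : 0 ≤ ℓ) (h : p ℓ ∈ S) : exitPoint p ℓ S = p ℓ := by
  have hℓS : ℓ ∈ hitTimes p ℓ S := ⟨⟨hℓ, le_rfl⟩, h⟩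
  rw [exitPoint_eq,
    le_antisymm (csSup_le ⟨ℓ, hℓS⟩ fun _ hu => hu.1.2) (le_csSup bddAbove_hitTimes hℓS)]

theorem hitTimes_reverse :
    hitTimes (fun u => p (ℓ - u)) ℓ S = (fun u => ℓ - u) '' hitTimes p ℓ S := by
  ext u
  simp only [hitTimes, mem_inter_iff, mem_preimage, mem_image, mem_Icc]
  constructor
  · rintro ⟨⟨h0, hℓ⟩, hS⟩
    exact ⟨ℓ - u, ⟨⟨by linarith, by linarith⟩, hS⟩, by ring⟩
  · rintro ⟨w, ⟨⟨h0, hℓ⟩, hS⟩, rfl⟩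
    exact ⟨⟨by linarith, by linarith⟩, by rwa [sub_sub_cancel]⟩

theorem exitPoint_reverse (hne : (hitTimes p ℓ S).Nonempty) :
    exitPoint (fun u => p (ℓ - u)) ℓ S = entrancePoint p ℓ S := by
  rw [exitPoint_eq, entrancePoint_eq, hitTimes_reverse,
    ← Antitone.map_csInf_of_continuousAt (continuous_sub_left ℓ).continuousAt
      (fun _ _ h => sub_le_sub_left h ℓ) hne bddBelow_hitTimes, sub_sub_cancel]

theorem entrancePoint_reverse (hne : (hitTimes p ℓ S).Nonempty) :
    entrancePoint (fun u => p (ℓ - u)) ℓ S = exitPoint p ℓ S := by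
  rw [exitPoint_eq, entrancePoint_eq, hitTimes_reverse,
    ← Antitone.map_csSup_of_continuousAt (continuous_sub_left ℓ).continuousAt
      (fun _ _ h => sub_le_sub_left h ℓ) hne bddAbove_hitTimes, sub_sub_cancel]

theorem image_reverse_Icc (p : ℝ → α) (ℓ : ℝ) :
    (fun u => p (ℓ - u)) '' Icc 0 ℓ = p '' Icc 0 ℓ := by
  rw [← image_image p (fun u => ℓ - u), image_const_sub_Icc, sub_self, sub_zero]

end HitTimes

section Geodesic

variable {γ q : ℝ → X} {ℓ C : ℝ}

theorem IsGeodesicParam.dist_eq_sub (hγ : IsGeodesicParam γ ℓ) {s u : ℝ} (hs : 0 ≤ s)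
    (hsu : s ≤ u) (hu : u ≤ ℓ) : dist (γ s) (γ u) = u - s := by
  rw [hγ.2 s ⟨hs, hsu.trans hu⟩ u ⟨hs.trans hsu, hu⟩, abs_sub_comm,
    abs_of_nonneg (sub_nonneg.2 hsu)]

theorem isAlmostGeodesic_of_le (hℓ : 0 ≤ ℓ)
    (h : ∀ s u, 0 ≤ s → s ≤ u → u ≤ ℓ →
      u - s - C ≤ dist (q s) (q u) ∧ dist (q s) (q u) ≤ u - s) :
    IsAlmostGeodesic C q ℓ := by
  refine ⟨hℓ, fun s hs u hu => ?_⟩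
  rcases le_total s u with hsu | hus
  · rw [abs_sub_comm, abs_of_nonneg (sub_nonneg.2 hsu)]
    exact h s u hs.1 hsu hu.2
  · rw [abs_of_nonneg (sub_nonneg.2 hus), dist_comm]
    exact h u s hu.1 hus hs.2

theorem IsGeodesicParam.isAlmostGeodesic (hγ : IsGeodesicParam γ ℓ) (hC : 0 ≤ C) :
    IsAlmostGeodesic C γ ℓ :=
  isAlmostGeodesic_of_le hγ.1 fun s u hs hsu hu => by
    rw [hγ.dist_eq_sub hs hsu hu]
    constructor <;> linarith

theorem IsAlmostGeodesic.continuousOn (hq : IsAlmostGeodesic C q ℓ) :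
    ContinuousOn q (Icc 0 ℓ) :=
  (LipschitzOnWith.of_dist_le_mul (K := 1) fun s hs u hu => by
    simpa [Real.dist_eq] using (hq.2 s hs u hu).2).continuousOn

theorem IsGeodesicParam.continuousOn (hγ : IsGeodesicParam γ ℓ) : ContinuousOn γ (Icc 0 ℓ) :=
  (hγ.isAlmostGeodesic le_rfl).continuousOn

theorem IsGeodesicParam.mono (hγ : IsGeodesicParam γ ℓ) {t : ℝ} (ht0 : 0 ≤ t) (ht : t ≤ ℓ) :
    IsGeodesicParam γ t :=
  ⟨ht0, fun s hs u hu => hγ.2 s ⟨hs.1, hs.2.trans ht⟩ u ⟨hu.1, hu.2.trans ht⟩⟩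

theorem IsGeodesicParam.comp_add (hγ : IsGeodesicParam γ ℓ) {t : ℝ} (ht : t ∈ Icc 0 ℓ) :
    IsGeodesicParam (fun u => γ (t + u)) (ℓ - t) :=
  ⟨sub_nonneg.2 ht.2, fun s hs u hu => by
    rw [hγ.2 _ ⟨by linarith [hs.1, ht.1], by linarith [hs.2]⟩ _
      ⟨by linarith [hu.1, ht.1], by linarith [hu.2]⟩, add_sub_add_left_eq_sub]⟩

theorem IsGeodesicParam.reverse (hγ : IsGeodesicParam γ ℓ) :
    IsGeodesicParam (fun u => γ (ℓ - u)) ℓ :=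
  ⟨hγ.1, fun s hs u hu => by
    rw [hγ.2 _ ⟨by linarith [hs.2], by linarith [hs.1]⟩ _ ⟨by linarith [hu.2], by linarith [hu.1]⟩,
      sub_sub_sub_cancel_left, abs_sub_comm]⟩

end Geodesic

noncomputable def concatPath {α : Type*} (p : ℝ → α) (a : ℝ) (r : ℝ → α) : ℝ → α :=
  fun u => if u ≤ a then p u else r (u - a)

section ConcatPath

variable {α : Type*} {p r : ℝ → α} {a : ℝ}

theorem concatPath_of_le {u : ℝ} (hu : u ≤ a) : concatPath p a r u = p u := if_pos hu

theorem concatPath_of_ge (h : p a = r 0) {u : ℝ} (hu : a ≤ u) :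
    concatPath p a r u = r (u - a) := by
  rcases hu.lt_or_eq with hu | rfl
  · exact if_neg hu.not_ge
  · rw [concatPath_of_le le_rfl, sub_self, h]

theorem concatPath_add (h : p a = r 0) {b : ℝ} (hb : 0 ≤ b) : concatPath p a r (a + b) = r b := by
  rw [concatPath_of_ge h (le_add_of_nonneg_right hb), add_sub_cancel_left]

end ConcatPath

theorem IsGeodesicParam.isAlmostGeodesic_concatPath {p r : ℝ → X} {a b : ℝ}
    (hp : IsGeodesicParam p a)
    (hr : IsGeodesicParam r b) (h : p a = r 0) {C : ℝ} (hbC : b ≤ C) :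
    IsAlmostGeodesic (2 * C) (concatPath p a r) (a + b) := by
  refine isAlmostGeodesic_of_le (add_nonneg hp.1 hr.1) fun s u hs hsu hu => ?_
  rcases le_total u a with hua | hau
  · rw [concatPath_of_le (hsu.trans hua), concatPath_of_le hua, hp.dist_eq_sub hs hsu hua]
    constructor <;> linarith [hr.1]
  rcases le_total s a with hsa | has
  · rw [concatPath_of_le hsa, concatPath_of_ge h hau]
    have h₁ := hp.dist_eq_sub hs hsa le_rfl
    have h₂ : dist (p a) (r (u - a)) = u - a := by
      rw [h, hr.dist_eq_sub le_rfl (by linarith) (by linarith), sub_zero]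
    constructor
    · linarith [dist_triangle (p s) (r (u - a)) (p a), dist_comm (r (u - a)) (p a)]
    · linarith [dist_triangle (p s) (p a) (r (u - a))]
  · rw [concatPath_of_ge h has, concatPath_of_ge h hau,
      hr.dist_eq_sub (by linarith) (by linarith) (by linarith)]
    constructor <;> linarith [hr.1]

def TubeApproachBound (A : Set X) (σ κ G : ℝ) : Prop :=
  ∀ (β : ℝ → X) (L : ℝ), IsGeodesicParam β L → β 0 ∈ ctubN κ A → β L ∈ ctubN σ A →
    (∀ u ∈ Ico 0 L, β u ∉ ctubN σ A) → L ≤ G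

theorem Alpha2With.tubeApproachBound {𝓐 : Set (Set X)} {ε M : ℝ} (hα2 : Alpha2With 𝓐 ε M)
    (hε : 0 < ε) {A : Set X} (hA : A ∈ 𝓐) {σ κ : ℝ} (hMσ : M ≤ σ) (hσκ : σ ≤ κ) :
    TubeApproachBound A σ κ ((κ + 1) / ε + 1) := by
  intro β L hβ h0 hL hout
  by_contra! hlong
  have hβ0 : infDist (β 0) A ≤ κ := h0
  have hβL : infDist (β L) A ≤ σ := hL
  have hεL : κ + 1 < ε * (L - 1) := (div_lt_iff₀' hε).1 (by linarith)
  have hL1 : 0 ≤ L - 1 := by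
    have : 0 ≤ (κ + 1) / ε := div_nonneg (by linarith [infDist_nonneg.trans hβ0]) hε.le
    linarith
  -- `β|[0, L-1]` has both endpoints `ε(L-1)`-close to `A`, yet stays outside `N̄_σ(A) ⊇ N_M(A)`.
  obtain ⟨u, hu, huA⟩ := hα2 β (L - 1) (hβ.mono hL1 (by linarith)) A hA
    (show infDist (β 0) A < ε * (L - 1) by linarith)
    (show infDist (β (L - 1)) A < ε * (L - 1) by
      have h1 : dist (β (L - 1)) (β L) = 1 := by
        rw [hβ.dist_eq_sub hL1 (by linarith) le_rfl]; ring
      linarith [infDist_le_infDist_add_dist (s := A) (x := β (L - 1)) (y := β L)])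
  exact hout u ⟨hu.1, by linarith [hu.2]⟩ (le_of_lt (lt_of_lt_of_le huA hMσ))

section TubeApproachBound

variable {A : Set X} {σ κ G : ℝ} {γ : ℝ → X} {ℓ : ℝ}

theorem TubeApproachBound.dist_entrancePoint_le (hG : TubeApproachBound A σ κ G)
    (hσκ : σ ≤ κ) (hγ : IsGeodesicParam γ ℓ) {b : ℝ} (hb : b ∈ Icc 0 ℓ)
    (hbA : γ b ∈ ctubN σ A) (hfirst : ∀ w ∈ Ico 0 b, γ w ∉ ctubN σ A) :
    dist (entrancePoint γ ℓ (ctubN κ A)) (γ b) ≤ G := by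
  have hbκ : b ∈ hitTimes γ ℓ (ctubN κ A) := ⟨hb, ctubN_mono hσκ hbA⟩
  have hs := csInf_hitTimes_mem hγ.continuousOn (isClosed_ctubN κ A) ⟨b, hbκ⟩
  set s := sInf (hitTimes γ ℓ (ctubN κ A))
  have hsb : s ≤ b := csInf_le bddBelow_hitTimes hbκ
  rw [entrancePoint_eq, hγ.dist_eq_sub hs.1.1 hsb hb.2]
  refine hG (fun u => γ (s + u)) (b - s)
    ((hγ.comp_add hs.1).mono (by linarith) (by linarith [hb.2])) ?_ ?_ ?_
  · simpa using hs.2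
  · simpa using hbA
  · exact fun u hu => hfirst (s + u) ⟨by linarith [hs.1.1, hu.1], by linarith [hu.2]⟩

theorem TubeApproachBound.dist_exitPoint_le (hG : TubeApproachBound A σ κ G)
    (hσκ : σ ≤ κ) (hγ : IsGeodesicParam γ ℓ) {a : ℝ} (ha : a ∈ Icc 0 ℓ)
    (haA : γ a ∈ ctubN σ A) (hlast : ∀ w ∈ Ioc a ℓ, γ w ∉ ctubN σ A) :
    dist (exitPoint γ ℓ (ctubN κ A)) (γ a) ≤ G := by
  have h := hG.dist_entrancePoint_le hσκ hγ.reverse (b := ℓ - a)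
    ⟨by linarith [ha.2], by linarith [ha.1]⟩ (by simpa using haA)
    fun w hw => hlast (ℓ - w) ⟨by linarith [hw.2], by linarith [hw.1]⟩
  rwa [entrancePoint_reverse (p := γ) (S := ctubN κ A) ⟨a, ha, ctubN_mono hσκ haA⟩,
    sub_sub_cancel] at h

theorem TubeApproachBound.dist_entrancePoint_entrancePoint_le
    (hG : TubeApproachBound A σ κ G) (hσκ : σ ≤ κ) (hγ : IsGeodesicParam γ ℓ) {t : ℝ}
    (ht : t ≤ ℓ) (hne : (hitTimes γ t (ctubN σ A)).Nonempty) :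
    dist (entrancePoint γ ℓ (ctubN κ A)) (entrancePoint γ t (ctubN σ A)) ≤ G := by
  obtain ⟨w, hw⟩ := hne
  have hb := csInf_hitTimes_mem (hγ.mono (hw.1.1.trans hw.1.2) ht).continuousOn
    (isClosed_ctubN σ A) ⟨w, hw⟩
  rw [entrancePoint_eq γ t]
  exact hG.dist_entrancePoint_le hσκ hγ ⟨hb.1.1, hb.1.2.trans ht⟩ hb.2 fun u hu huA =>
    hu.2.not_ge (csInf_le bddBelow_hitTimes ⟨⟨hu.1, hu.2.le.trans hb.1.2⟩, huA⟩)

theorem TubeApproachBound.dist_exitPoint_exitPoint_le (hG : TubeApproachBound A σ κ G)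
    (hσκ : σ ≤ κ) (hγ : IsGeodesicParam γ ℓ) (hne : (hitTimes γ ℓ (ctubN σ A)).Nonempty) :
    dist (exitPoint γ ℓ (ctubN κ A)) (exitPoint γ ℓ (ctubN σ A)) ≤ G := by
  have ha := csSup_hitTimes_mem hγ.continuousOn (isClosed_ctubN σ A) hne
  rw [exitPoint_eq γ ℓ (ctubN σ A)]
  exact hG.dist_exitPoint_le hσκ hγ ha.1 ha.2 fun u hu huA =>
    hu.1.not_ge (le_csSup bddAbove_hitTimes ⟨⟨ha.1.1.trans hu.1.le, hu.2⟩, huA⟩)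

theorem TubeApproachBound.dist_entrancePoint_le_of_dist_lt {γ' : ℝ → X} {ℓ' t δ : ℝ}
    (hG : TubeApproachBound A σ κ G) (hσκ : σ ≤ κ) (hγ : IsGeodesicParam γ ℓ)
    (hγ' : IsGeodesicParam γ' ℓ') (ht : t ≤ ℓ') (hne : (hitTimes γ ℓ (ctubN σ A)).Nonempty)
    (hne' : (hitTimes γ' t (ctubN σ A)).Nonempty)
    (hd : dist (entrancePoint γ ℓ (ctubN σ A)) (entrancePoint γ' t (ctubN σ A)) < δ) :
    dist (entrancePoint γ ℓ (ctubN κ A)) (entrancePoint γ' ℓ' (ctubN κ A)) ≤ 2 * G + δ := by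
  have h₁ := hG.dist_entrancePoint_entrancePoint_le hσκ hγ le_rfl hne
  have h₂ := hG.dist_entrancePoint_entrancePoint_le hσκ hγ' ht hne'
  rw [dist_comm] at h₂
  linarith [dist_triangle4 (entrancePoint γ ℓ (ctubN κ A)) (entrancePoint γ ℓ (ctubN σ A))
    (entrancePoint γ' t (ctubN σ A)) (entrancePoint γ' ℓ' (ctubN κ A))]

end TubeApproachBound

theorem StarATGWith.triangle {𝓐 : Set (Set X)} {C σ δ : ℝ} (h : StarATGWith 𝓐 C σ δ)
    {p₀ p₁ p₂ : ℝ → X} {l₀ l₁ l₂ : ℝ} (h₀ : IsAlmostGeodesic C p₀ l₀)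
    (h₁ : IsAlmostGeodesic C p₁ l₁) (h₂ : IsAlmostGeodesic C p₂ l₂)
    (h₀₁ : p₀ l₀ = p₁ 0) (h₁₂ : p₁ l₁ = p₂ 0) (h₂₀ : p₂ l₂ = p₀ 0) :
    (∃ a, (closedBall a σ ∩ p₀ '' Icc 0 l₀).Nonempty ∧ (closedBall a σ ∩ p₁ '' Icc 0 l₁).Nonempty ∧
      (closedBall a σ ∩ p₂ '' Icc 0 l₂).Nonempty) ∨
    ∃ A ∈ 𝓐, (hitTimes p₀ l₀ (ctubN σ A)).Nonempty ∧ (hitTimes p₁ l₁ (ctubN σ A)).Nonempty ∧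
      (hitTimes p₂ l₂ (ctubN σ A)).Nonempty ∧
      dist (exitPoint p₀ l₀ (ctubN σ A)) (entrancePoint p₁ l₁ (ctubN σ A)) < δ ∧
      dist (exitPoint p₁ l₁ (ctubN σ A)) (entrancePoint p₂ l₂ (ctubN σ A)) < δ ∧
      dist (exitPoint p₂ l₂ (ctubN σ A)) (entrancePoint p₀ l₀ (ctubN σ A)) < δ := by
  have hedges : ∀ i, IsAlmostGeodesic C (![p₀, p₁, p₂] i) (![l₀, l₁, l₂] i) := by
    intro i; fin_cases i <;> assumption
  rcases h ⟨![p₀, p₁, p₂], ![l₀, l₁, l₂]⟩ ⟨fun i => (hedges i).1, fun i => by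
      fin_cases i <;> assumption⟩ hedges with ⟨a, ha⟩ | ⟨A, hA, hne, hd⟩
  · exact Or.inl ⟨a, ha 0, ha 1, ha 2⟩
  · exact Or.inr ⟨A, hA, hitTimes_nonempty_iff.2 (hne 0), hitTimes_nonempty_iff.2 (hne 1),
      hitTimes_nonempty_iff.2 (hne 2), hd 0, hd 1, hd 2⟩

theorem infDist_le_of_closedBall_inter_nonempty {z a : X} {P Q R : Set X} {σ C : ℝ}
    (hPQ : ∀ x ∈ P, ∀ y ∈ Q, dist z x ≤ dist x y + C) (hP : (closedBall a σ ∩ P).Nonempty)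
    (hQ : (closedBall a σ ∩ Q).Nonempty) (hR : (closedBall a σ ∩ R).Nonempty) :
    infDist z R ≤ 4 * σ + C := by
  obtain ⟨x, hxa, hx⟩ := hP
  obtain ⟨y, hya, hy⟩ := hQ
  obtain ⟨w, hwa, hw⟩ := hR
  rw [mem_closedBall] at hxa hya hwa
  linarith [hPQ x hx y hy, dist_triangle x a y, dist_triangle4 z x a w, dist_comm a y,
    dist_comm a w, infDist_le_dist_of_mem (x := z) hw]

section Detour

variable {γ γ' g : ℝ → X} {ℓ ℓ' lg t C : ℝ}

theorem IsGeodesicParam.isAlmostGeodesic_detour (hγ' : IsGeodesicParam γ' ℓ') (ht : t ∈ Icc 0 ℓ')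
    (hg : IsGeodesicParam g lg) (hg0 : g 0 = γ' ℓ') (hlg : lg ≤ C) :
    IsAlmostGeodesic (2 * C) (concatPath (fun u => γ' (t + u)) (ℓ' - t) g) (ℓ' - t + lg) :=
  (hγ'.comp_add ht).isAlmostGeodesic_concatPath hg (by simp only [add_sub_cancel, hg0]) hlg

theorem dist_le_dist_concatPath_add (hγ' : IsGeodesicParam γ' ℓ') (ht : t ∈ Icc 0 ℓ')
    (hg : IsGeodesicParam g lg) (hg0 : g 0 = γ' ℓ') (hlg : lg ≤ C) :
    ∀ x ∈ γ' '' Icc 0 t, ∀ y ∈ concatPath (fun u => γ' (t + u)) (ℓ' - t) g '' Icc 0 (ℓ' - t + lg),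
      dist (γ' t) x ≤ dist x y + C := by
  rintro _ ⟨s, hs, rfl⟩ _ ⟨v, hv, rfl⟩
  rw [dist_comm, hγ'.dist_eq_sub hs.1 hs.2 ht.2]
  rcases le_total v (ℓ' - t) with hvj | hjv
  · rw [concatPath_of_le hvj, hγ'.dist_eq_sub hs.1 (by linarith [hv.1, hs.2]) (by linarith)]
    linarith [hv.1, hs.2, hg.1]
  · have hjoin : γ' (t + (ℓ' - t)) = g 0 := by rw [add_sub_cancel, hg0]
    rw [concatPath_of_ge (p := fun u => γ' (t + u)) hjoin hjv]
    have hgv : dist (g (v - (ℓ' - t))) (γ' ℓ') ≤ C := by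
      rw [← hg0, dist_comm, hg.dist_eq_sub le_rfl (by linarith) (by linarith [hv.2])]
      linarith [hv.2]
    linarith [hγ'.dist_eq_sub hs.1 (hs.2.trans ht.2) le_rfl, ht.2,
      dist_triangle (γ' s) (g (v - (ℓ' - t))) (γ' ℓ')]

theorem mem_ctubN_of_dist_exitPoint_lt {A : Set X} {σ δ : ℝ} (hγ' : IsGeodesicParam γ' ℓ')
    (ht : t ∈ Icc 0 ℓ') (hg : IsGeodesicParam g lg) (hg0 : g 0 = γ' ℓ') (hlg : lg ≤ C)
    (hne₀ : (hitTimes γ' t (ctubN σ A)).Nonempty)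
    (hne₁ : (hitTimes (concatPath (fun u => γ' (t + u)) (ℓ' - t) g) (ℓ' - t + lg)
      (ctubN σ A)).Nonempty)
    (hd : dist (exitPoint γ' t (ctubN σ A))
      (entrancePoint (concatPath (fun u => γ' (t + u)) (ℓ' - t) g) (ℓ' - t + lg) (ctubN σ A)) < δ) :
    γ' t ∈ ctubN (σ + δ + C) A := by
  obtain ⟨hxA, hx⟩ :=
    exitPoint_mem (hγ'.mono ht.1 ht.2).continuousOn (isClosed_ctubN σ A) hne₀
  have hy := (entrancePoint_mem (hγ'.isAlmostGeodesic_detour ht hg hg0 hlg).continuousOn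
    (isClosed_ctubN σ A) hne₁).2
  have hxA' : infDist (exitPoint γ' t (ctubN σ A)) A ≤ σ := hxA
  show infDist (γ' t) A ≤ σ + δ + C
  linarith [dist_le_dist_concatPath_add hγ' ht hg hg0 hlg _ hx _ hy,
    infDist_le_infDist_add_dist (s := A) (x := γ' t) (y := exitPoint γ' t (ctubN σ A))]

theorem TubeApproachBound.dist_exitPoint_le_of_concatPath {A : Set X} {σ κ G δ : ℝ}
    (hG : TubeApproachBound A σ κ G) (hσCκ : σ + C ≤ κ) (hγ : IsGeodesicParam γ ℓ)
    (hγ' : IsGeodesicParam γ' ℓ') (ht : t ∈ Icc 0 ℓ') (hg : IsGeodesicParam g lg)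
    (hg0 : g 0 = γ' ℓ') (hg1 : g lg = γ ℓ) (hlg : lg ≤ C)
    (hne : (hitTimes γ ℓ (ctubN σ A)).Nonempty)
    (hq : (hitTimes (concatPath (fun u => γ' (t + u)) (ℓ' - t) g) (ℓ' - t + lg)
      (ctubN σ A)).Nonempty)
    (hd : dist (exitPoint (concatPath (fun u => γ' (t + u)) (ℓ' - t) g) (ℓ' - t + lg)
      (ctubN σ A)) (exitPoint γ ℓ (ctubN σ A)) < δ) :
    dist (exitPoint γ ℓ (ctubN κ A)) (exitPoint γ' ℓ' (ctubN κ A)) ≤ max (2 * G + δ) C := by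
  have hσκ' : σ ≤ κ := by linarith [hg.1]
  have hjoin : (fun u => γ' (t + u)) (ℓ' - t) = g 0 := by simp only [add_sub_cancel, hg0]
  set q := concatPath (fun u => γ' (t + u)) (ℓ' - t) g
  have hv := csSup_hitTimes_mem (hγ'.isAlmostGeodesic_detour ht hg hg0 hlg).continuousOn
    (isClosed_ctubN σ A) hq
  set v := sSup (hitTimes q (ℓ' - t + lg) (ctubN σ A))
  rw [exitPoint_eq q] at hd
  rcases le_total v (ℓ' - t) with hvj | hjv
  · -- The last visit of `q` to `N̄_σ(A)` lies on `γ'`, and is also the last visit of `γ'`.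
    have hqv : q v = γ' (t + v) := concatPath_of_le hvj
    have hlast : ∀ w ∈ Ioc (t + v) ℓ', γ' w ∉ ctubN σ A := fun w hw hwA => by
      have hw' : w - t ∈ hitTimes q (ℓ' - t + lg) (ctubN σ A) := by
        refine ⟨⟨by linarith [hv.1.1, hw.1], by linarith [hw.2, hg.1]⟩, ?_⟩
        show concatPath (fun u => γ' (t + u)) (ℓ' - t) g (w - t) ∈ ctubN σ A
        rwa [concatPath_of_le (by linarith [hw.2]), add_sub_cancel]
      linarith [le_csSup bddAbove_hitTimes hw', hw.1]
    have h₁ := hG.dist_exitPoint_le hσκ' hγ' ⟨by linarith [hv.1.1, ht.1], by linarith⟩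
      (hqv ▸ hv.2) hlast
    have h₂ := hG.dist_exitPoint_exitPoint_le hσκ' hγ hne
    rw [← hqv, dist_comm] at h₁
    rw [dist_comm] at hd
    refine le_max_of_le_left ?_
    linarith [dist_triangle4 (exitPoint γ ℓ (ctubN κ A)) (exitPoint γ ℓ (ctubN σ A)) (q v)
      (exitPoint γ' ℓ' (ctubN κ A))]
  · -- The last visit lies on `g`, so both endpoints are in `N̄_κ(A)`, hence their own exit points.
    have hqv : q v = g (v - (ℓ' - t)) := concatPath_of_ge (p := fun u => γ' (t + u)) hjoin hjv
    have hv' : v - (ℓ' - t) ∈ Icc 0 lg := ⟨by linarith, by linarith [hv.1.2]⟩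
    have hnear : ∀ s ∈ Icc 0 lg, g s ∈ ctubN κ A := fun s hs => by
      have hvA : infDist (q v) A ≤ σ := hv.2
      have hsv : dist (g s) (q v) ≤ C := by
        rw [hqv, hg.2 s hs _ hv']
        exact (abs_sub_le_iff.2 ⟨by linarith [hs.2, hv'.1], by linarith [hs.1, hv'.2]⟩).trans hlg
      show infDist (g s) A ≤ κ
      linarith [infDist_le_infDist_add_dist (s := A) (x := g s) (y := q v)]
    rw [exitPoint_of_mem hγ.1 (hg1 ▸ hnear lg ⟨hg.1, le_rfl⟩),
      exitPoint_of_mem hγ'.1 (hg0 ▸ hnear 0 ⟨le_rfl, hg.1⟩), ← hg0, ← hg1, dist_comm,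
      hg.dist_eq_sub le_rfl hg.1 le_rfl, sub_zero]
    exact le_max_of_le_right hlg

end Detour

theorem geodesics_with_close_endpoints_general (hX : GeodesicSpace X) (𝓐 : Set (Set X))
    (ε M : ℝ) (hε0 : 0 < ε) (hM : 0 < M)
    (hα2 : Alpha2With 𝓐 ε M)
    (hstar : ∀ C : ℝ, 0 ≤ C → ∃ σ δ : ℝ, M ≤ σ ∧ StarATGWith 𝓐 C σ δ) :
    ∀ C : ℝ, 0 ≤ C → ∃ κ : ℝ, 0 ≤ κ ∧ ∃ lam : ℝ, 0 ≤ lam ∧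
      ∀ (γ : ℝ → X) (ℓ : ℝ), IsGeodesicParam γ ℓ →
      ∀ (γ' : ℝ → X) (ℓ' : ℝ), IsGeodesicParam γ' ℓ' →
      γ 0 = γ' 0 → dist (γ ℓ) (γ' ℓ') ≤ C →
      ∀ z ∈ γ' '' Set.Icc (0:ℝ) ℓ',
        z ∈ ctubN κ (γ '' Set.Icc (0:ℝ) ℓ) ∨
        ∃ A ∈ 𝓐, z ∈ ctubN κ A ∧ (∃ s ∈ Set.Icc (0:ℝ) ℓ, γ s ∈ ctubN κ A) ∧
          dist (entrancePoint γ ℓ (ctubN κ A)) (entrancePoint γ' ℓ' (ctubN κ A)) ≤ lam ∧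
          dist (exitPoint γ ℓ (ctubN κ A)) (exitPoint γ' ℓ' (ctubN κ A)) ≤ lam := by
  intro C hC
  obtain ⟨σ, δ, hMσ, hstarC⟩ := hstar (2 * C) (by positivity)
  have hσ : 0 < σ := hM.trans_le hMσ
  have hδ := le_abs_self δ
  have hδ₀ := abs_nonneg δ
  set κ := 4 * σ + |δ| + C with hκ
  set G := (κ + 1) / ε + 1
  refine ⟨κ, by positivity, max (2 * G + |δ|) C, le_max_of_le_right hC, ?_⟩
  rintro γ ℓ hγ γ' ℓ' hγ' h0 hend _ ⟨t, ht, rfl⟩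
  obtain ⟨g, lg, hg, hg0, hg1⟩ := hX (γ' ℓ') (γ ℓ)
  have hlg : lg ≤ C := by
    rwa [← sub_zero lg, ← hg.dist_eq_sub le_rfl hg.1 le_rfl, hg0, hg1, dist_comm]
  rcases hstarC.triangle ((hγ'.mono ht.1 ht.2).isAlmostGeodesic (by positivity))
    (hγ'.isAlmostGeodesic_detour ht hg hg0 hlg)
    (hγ.reverse.isAlmostGeodesic (by positivity))
    (by rw [concatPath_of_le (sub_nonneg.2 ht.2), add_zero])
    (by rw [concatPath_add (by simp only [add_sub_cancel, hg0]) hg.1, hg1, sub_zero])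
    (by simp [h0]) with ⟨a, ha₀, ha₁, ha₂⟩ | ⟨A, hA, hne₀, hne₁, hne₂, hd₀, hd₁, hd₂⟩
  · rw [image_reverse_Icc] at ha₂
    exact Or.inl ((infDist_le_of_closedBall_inter_nonempty
      (dist_le_dist_concatPath_add hγ' ht hg hg0 hlg) ha₀ ha₁ ha₂).trans (by linarith))
  have hne : (hitTimes γ ℓ (ctubN σ A)).Nonempty := (hitTimes_reverse ▸ hne₂).of_image
  have hG := hα2.tubeApproachBound hε0 hA hMσ (show σ ≤ κ by linarith)
  rw [exitPoint_reverse hne] at hd₂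
  rw [entrancePoint_reverse hne] at hd₁
  refine Or.inr ⟨A, hA, ?_, ?_, ?_, ?_⟩
  · exact ctubN_mono (by linarith)
      (mem_ctubN_of_dist_exitPoint_lt hγ' ht hg hg0 hlg hne₀ hne₁ hd₀)
  · obtain ⟨s, hs, hsA⟩ := hne
    exact ⟨s, hs, ctubN_mono (by linarith) hsA⟩
  · exact (hG.dist_entrancePoint_le_of_dist_lt (by linarith) hγ hγ' ht.2 hne hne₀
      hd₂).trans (le_max_of_le_left (by linarith))
  · exact (hG.dist_exitPoint_le_of_concatPath (by linarith) hγ hγ' ht hg hg0 hg1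
      hlg hne hne₁ hd₁).trans (max_le_max (by linarith) le_rfl)

/-- **Lemma.** Let `X` be geodesic and `(*)`-ATG with respect to `𝓐` (with the constant
`σ` always at least the constant `M` of (α₂)), and assume (α₂).  Then for every `C ≥ 0`
there are `κ, lam ≥ 0` such that for any two geodesics `γ, γ'` with common origin and
endpoints at distance at most `C`, every point of `γ'` either lies in the closed
`κ`-neighborhood of `γ`, or lies in the closed `κ`-neighborhood of some `A ∈ 𝓐` whose
closed `κ`-neighborhood meets `γ`; and in the latter case the entrance points (resp.
exit points) of `γ` and `γ'` in that neighborhood are at distance at most `lam`. -/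
theorem geodesics_with_close_endpoints (hX : GeodesicSpace X) (𝓐 : Set (Set X))
    (ε M : ℝ) (hε0 : 0 < ε) (hε : ε < 1/2) (hM : 0 < M)
    (hα2 : Alpha2With 𝓐 ε M)
    (hstar : ∀ C : ℝ, 0 ≤ C → ∃ σ δ : ℝ, M ≤ σ ∧ StarATGWith 𝓐 C σ δ) :
    ∀ C : ℝ, 0 ≤ C → ∃ κ : ℝ, 0 ≤ κ ∧ ∃ lam : ℝ, 0 ≤ lam ∧
      ∀ (γ : ℝ → X) (ℓ : ℝ), IsGeodesicParam γ ℓ →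
      ∀ (γ' : ℝ → X) (ℓ' : ℝ), IsGeodesicParam γ' ℓ' →
      γ 0 = γ' 0 → dist (γ ℓ) (γ' ℓ') ≤ C →
      ∀ z ∈ γ' '' Set.Icc (0:ℝ) ℓ',
        z ∈ ctubN κ (γ '' Set.Icc (0:ℝ) ℓ) ∨
        ∃ A ∈ 𝓐, z ∈ ctubN κ A ∧ (∃ s ∈ Set.Icc (0:ℝ) ℓ, γ s ∈ ctubN κ A) ∧
          dist (entrancePoint γ ℓ (ctubN κ A)) (entrancePoint γ' ℓ' (ctubN κ A)) ≤ lam ∧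
          dist (exitPoint γ ℓ (ctubN κ A)) (exitPoint γ' ℓ' (ctubN κ A)) ≤ lam :=
  geodesics_with_close_endpoints_general hX 𝓐 ε M hε0 hM hα2 hstar
end

section
/- Let γ₁ and γ₂ be two topological arcs in a metric space Y with common endpoints. Then every point z ∈ γ₁ ∖ γ₂ lies in the interior of a simple 𝒯-bigon formed by γ₁ and γ₂. -/
open Set Metric

/-- A topological arc in `Y`: a topological embedding of `[0,1]` into `Y`
(continuous and injective on `[0,1]`, which suffices since `[0,1]` is compact
and `Y` is Hausdorff). -/
structure TopArc (Y : Type*) [MetricSpace Y] where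
  toFun : ℝ → Y
  cont : ContinuousOn toFun (Set.Icc 0 1)
  inj : Set.InjOn toFun (Set.Icc 0 1)

namespace TopArc
variable {Y : Type*} [MetricSpace Y]
/-- The arc, as a subset of `Y`. -/
def image (γ : TopArc Y) : Set Y := γ.toFun '' Set.Icc 0 1
end TopArc

/-- A `𝒯`-bigon formed by two topological arcs `γ₁`, `γ₂`: a sub-arc of `γ₁` and a
sub-arc of `γ₂` with common endpoints. -/
structure TBigon {Y : Type*} [MetricSpace Y] (γ₁ γ₂ : TopArc Y) where
  a₁ : ℝ
  b₁ : ℝ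
  a₂ : ℝ
  b₂ : ℝ
  ha₁ : a₁ ∈ Set.Icc (0:ℝ) 1
  hb₁ : b₁ ∈ Set.Icc (0:ℝ) 1
  ha₂ : a₂ ∈ Set.Icc (0:ℝ) 1
  hb₂ : b₂ ∈ Set.Icc (0:ℝ) 1
  hle₁ : a₁ ≤ b₁
  hle₂ : a₂ ≤ b₂
  ends_eq : ({γ₁.toFun a₁, γ₁.toFun b₁} : Set Y) = {γ₂.toFun a₂, γ₂.toFun b₂}

namespace TBigon
variable {Y : Type*} [MetricSpace Y] {γ₁ γ₂ : TopArc Y}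

/-- The sub-arc of `γ₁`. -/
def side₁ (T : TBigon γ₁ γ₂) : Set Y := γ₁.toFun '' Set.Icc T.a₁ T.b₁
/-- The sub-arc of `γ₂`. -/
def side₂ (T : TBigon γ₁ γ₂) : Set Y := γ₂.toFun '' Set.Icc T.a₂ T.b₂
/-- The bigon, as a subset of `Y`. -/
def carrier (T : TBigon γ₁ γ₂) : Set Y := T.side₁ ∪ T.side₂
/-- The endpoints of the bigon. -/
def endpoints (T : TBigon γ₁ γ₂) : Set Y := {γ₁.toFun T.a₁, γ₁.toFun T.b₁}
/-- The interior of the bigon. -/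
def interiorSet (T : TBigon γ₁ γ₂) : Set Y := T.carrier \ T.endpoints
/-- The bigon is simple: its two sides meet only in their endpoints. -/
def Simple (T : TBigon γ₁ γ₂) : Prop := T.side₁ ∩ T.side₂ = T.endpoints
/-- The bigon is non-trivial: it is not reduced to a point. -/
def Nontrivial (T : TBigon γ₁ γ₂) : Prop := ¬ ∃ p : Y, T.carrier = {p}

end TBigon

/-- Property (T₁) for a collection of subsets: two distinct members have at most one
common point. -/
def PropT1 {Y : Type*} (𝓑 : Set (Set Y)) : Prop :=
  ∀ B ∈ 𝓑, ∀ B' ∈ 𝓑, B ≠ B' → (B ∩ B').Subsingleton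

/-- **Lemma.** If `γ₁` and `γ₂` are topological arcs with common endpoints, then every
point `z ∈ γ₁ ∖ γ₂` lies in the interior of a simple `𝒯`-bigon formed by `γ₁` and
`γ₂`. -/
theorem point_in_simple_bigon {Y : Type*} [MetricSpace Y] (γ₁ γ₂ : TopArc Y)
    (hends : ({γ₁.toFun 0, γ₁.toFun 1} : Set Y) = {γ₂.toFun 0, γ₂.toFun 1})
    (z : Y) (hz : z ∈ γ₁.image \ γ₂.image) :
    ∃ T : TBigon γ₁ γ₂, T.Simple ∧ z ∈ T.interiorSet := by
  obtain ⟨hz1, hz2⟩ := hz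
  obtain ⟨t, ht, rfl⟩ := hz1
  have hC : IsClosed γ₂.image :=
    (isCompact_Icc.image_of_continuousOn γ₂.cont).isClosed
  have h0im : γ₁.toFun 0 ∈ γ₂.image := by
    have h : γ₁.toFun 0 ∈ ({γ₂.toFun 0, γ₂.toFun 1} : Set Y) := by
      rw [← hends]; left; rfl
    rcases h with h | h
    · exact ⟨0, by norm_num, h.symm⟩
    · exact ⟨1, by norm_num, h.symm⟩
  have h1im : γ₁.toFun 1 ∈ γ₂.image := by
    have h : γ₁.toFun 1 ∈ ({γ₂.toFun 0, γ₂.toFun 1} : Set Y) := by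
      rw [← hends]; right; rfl
    rcases h with h | h
    · exact ⟨0, by norm_num, h.symm⟩
    · exact ⟨1, by norm_num, h.symm⟩
  set Sm : Set ℝ := Icc 0 t ∩ γ₁.toFun ⁻¹' γ₂.image with hSm
  set Sp : Set ℝ := Icc t 1 ∩ γ₁.toFun ⁻¹' γ₂.image with hSp
  have hSmCl : IsClosed Sm :=
    (γ₁.cont.mono (Icc_subset_Icc_right ht.2)).preimage_isClosed_of_isClosed
      isClosed_Icc hC
  have hSpCl : IsClosed Sp :=
    (γ₁.cont.mono (Icc_subset_Icc_left ht.1)).preimage_isClosed_of_isClosed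
      isClosed_Icc hC
  have hSmNe : Sm.Nonempty := ⟨0, ⟨le_refl 0, ht.1⟩, h0im⟩
  have hSpNe : Sp.Nonempty := ⟨1, ⟨ht.2, le_refl 1⟩, h1im⟩
  have hSmBdd : BddAbove Sm := ⟨t, fun x hx => hx.1.2⟩
  have hSpBdd : BddBelow Sp := ⟨t, fun x hx => hx.1.1⟩
  set a₁ := sSup Sm with ha₁def
  set b₁ := sInf Sp with hb₁def
  have ha₁mem : a₁ ∈ Sm := hSmCl.csSup_mem hSmNe hSmBdd
  have hb₁mem : b₁ ∈ Sp := hSpCl.csInf_mem hSpNe hSpBdd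
  have ha₁lt : a₁ < t := by
    rcases lt_or_eq_of_le ha₁mem.1.2 with h | h
    · exact h
    · exact absurd (h ▸ ha₁mem.2) hz2
  have hb₁gt : t < b₁ := by
    rcases lt_or_eq_of_le hb₁mem.1.1 with h | h
    · exact h
    · exact absurd (h ▸ hb₁mem.2) hz2
  have ha₁I : a₁ ∈ Icc (0:ℝ) 1 := ⟨ha₁mem.1.1, le_trans ha₁mem.1.2 ht.2⟩
  have hb₁I : b₁ ∈ Icc (0:ℝ) 1 := ⟨le_trans ht.1 hb₁mem.1.1, hb₁mem.1.2⟩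
  obtain ⟨u, huI, hu2⟩ := ha₁mem.2
  obtain ⟨v, hvI, hv2⟩ := hb₁mem.2
  have hpair : ({γ₁.toFun a₁, γ₁.toFun b₁} : Set Y) = {γ₂.toFun u, γ₂.toFun v} := by
    rw [hu2, hv2]
  -- no point of the open middle part of γ₁ lies on γ₂
  have hmid : ∀ s ∈ Ioo a₁ b₁, γ₁.toFun s ∉ γ₂.image := by
    intro s hs hsim
    rcases le_or_gt s t with hst | hst
    · have : s ∈ Sm := ⟨⟨le_trans ha₁mem.1.1 hs.1.le, hst⟩, hsim⟩
      exact absurd (le_csSup hSmBdd this) (not_le.mpr hs.1)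
    · have : s ∈ Sp := ⟨⟨hst.le, le_trans hs.2.le hb₁mem.1.2⟩, hsim⟩
      exact absurd (csInf_le hSpBdd this) (not_le.mpr hs.2)
  have hsub : ∀ y ∈ γ₁.toFun '' Icc a₁ b₁, y ∈ γ₂.image →
      y ∈ ({γ₁.toFun a₁, γ₁.toFun b₁} : Set Y) := by
    rintro y ⟨s, hs, rfl⟩ hyim
    rcases eq_or_lt_of_le hs.1 with h1 | h1
    · exact Or.inl (by rw [← h1])
    rcases eq_or_lt_of_le hs.2 with h2 | h2
    · exact Or.inr (by rw [h2]; exact rfl)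
    exact absurd hyim (hmid s ⟨h1, h2⟩)
  -- build the bigon; orient u, v
  rcases le_total u v with huv | huv
  · refine ⟨⟨a₁, b₁, u, v, ha₁I, hb₁I, huI, hvI, le_of_lt (lt_trans ha₁lt hb₁gt),
      huv, by rw [hpair]⟩, ?_, ?_⟩
    · apply Set.Subset.antisymm
      · rintro y ⟨hy1, hy2⟩
        refine hsub y hy1 ?_
        obtain ⟨w, hw, rfl⟩ := hy2
        exact ⟨w, ⟨le_trans huI.1 hw.1, le_trans hw.2 hvI.2⟩, rfl⟩
      · intro y hy
        constructor
        · rcases hy with h | h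
          · exact ⟨a₁, ⟨le_refl _, le_of_lt (lt_trans ha₁lt hb₁gt)⟩, h.symm⟩
          · exact ⟨b₁, ⟨le_of_lt (lt_trans ha₁lt hb₁gt), le_refl _⟩, h.symm⟩
        · have : y ∈ ({γ₂.toFun u, γ₂.toFun v} : Set Y) := hpair ▸ hy
          rcases this with h | h
          · exact ⟨u, ⟨le_refl _, huv⟩, h.symm⟩
          · exact ⟨v, ⟨huv, le_refl _⟩, h.symm⟩
    · constructor
      · left; exact ⟨t, ⟨ha₁lt.le, hb₁gt.le⟩, rfl⟩
      · intro hmem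
        rcases hmem with h | h
        · exact hz2 (h ▸ ha₁mem.2)
        · exact hz2 (h ▸ hb₁mem.2)
  · refine ⟨⟨a₁, b₁, v, u, ha₁I, hb₁I, hvI, huI, le_of_lt (lt_trans ha₁lt hb₁gt),
      huv, by rw [hpair, Set.pair_comm]⟩, ?_, ?_⟩
    · apply Set.Subset.antisymm
      · rintro y ⟨hy1, hy2⟩
        refine hsub y hy1 ?_
        obtain ⟨w, hw, rfl⟩ := hy2
        exact ⟨w, ⟨le_trans hvI.1 hw.1, le_trans hw.2 huI.2⟩, rfl⟩
      · intro y hy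
        constructor
        · rcases hy with h | h
          · exact ⟨a₁, ⟨le_refl _, le_of_lt (lt_trans ha₁lt hb₁gt)⟩, h.symm⟩
          · exact ⟨b₁, ⟨le_of_lt (lt_trans ha₁lt hb₁gt), le_refl _⟩, h.symm⟩
        · have : y ∈ ({γ₂.toFun u, γ₂.toFun v} : Set Y) := hpair ▸ hy
          rcases this with h | h
          · exact ⟨u, ⟨huv, le_refl _⟩, h.symm⟩
          · exact ⟨v, ⟨le_refl _, huv⟩, h.symm⟩
    · constructor
      · left; exact ⟨t, ⟨ha₁lt.le, hb₁gt.le⟩, rfl⟩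
      · intro hmem
        rcases hmem with h | h
        · exact hz2 (h ▸ ha₁mem.2)
        · exact hz2 (h ▸ hb₁mem.2)
end

section
/- Let Y be a metric space and let 𝓑 be a collection of subsets of Y satisfying property (T1). Let γ₁ and γ₂ be two topological arcs with common endpoints, with the property that every non-trivial simple 𝒯-bigon formed by γ₁ and γ₂ is contained in some member of 𝓑. If γ₁ is contained in a member B ∈ 𝓑, then γ₂ is also contained in B. -/
open Set Metric

/-- **Lemma.** Let `𝓑` satisfy (T₁) and let `γ₁`, `γ₂` be topological arcs with common
endpoints such that every non-trivial simple `𝒯`-bigon formed by `γ₁` and `γ₂` is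
contained in a member of `𝓑`.  If `γ₁ ⊆ B ∈ 𝓑` then `γ₂ ⊆ B`. -/
theorem arc_in_same_piece {Y : Type*} [MetricSpace Y] (𝓑 : Set (Set Y))
    (hT1 : PropT1 𝓑) (γ₁ γ₂ : TopArc Y)
    (hends : ({γ₁.toFun 0, γ₁.toFun 1} : Set Y) = {γ₂.toFun 0, γ₂.toFun 1})
    (hbig : ∀ T : TBigon γ₁ γ₂, T.Simple → T.Nontrivial → ∃ B ∈ 𝓑, T.carrier ⊆ B)
    (B : Set Y) (hB : B ∈ 𝓑) (h1 : γ₁.image ⊆ B) :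
    γ₂.image ⊆ B := by

  intro x hx
  obtain ⟨t, ht, rfl⟩ := hx
  by_cases htin : γ₂.toFun t ∈ γ₁.image
  · exact h1 htin
  -- S : set of parameters where γ₂ meets γ₁
  set S : Set ℝ := Set.Icc 0 1 ∩ γ₂.toFun ⁻¹' γ₁.image with hS
  have hcomp : IsCompact γ₁.image :=
    isCompact_Icc.image_of_continuousOn γ₁.cont
  have hSclosed : IsClosed S :=
    γ₂.cont.preimage_isClosed_of_isClosed isClosed_Icc hcomp.isClosed
  have h0S : (0:ℝ) ∈ S := by
    refine ⟨by simp, ?_⟩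
    have : γ₂.toFun 0 ∈ ({γ₂.toFun 0, γ₂.toFun 1} : Set Y) := by simp
    rw [← hends] at this
    rcases this with h | h
    · exact ⟨0, by simp, h.symm⟩
    · exact ⟨1, by simp, h.symm⟩
  have h1S : (1:ℝ) ∈ S := by
    refine ⟨by simp, ?_⟩
    have : γ₂.toFun 1 ∈ ({γ₂.toFun 0, γ₂.toFun 1} : Set Y) := by simp
    rw [← hends] at this
    rcases this with h | h
    · exact ⟨0, by simp, h.symm⟩
    · exact ⟨1, by simp, h.symm⟩
  have htS : t ∉ S := fun h => htin h.2
  set a := sSup (S ∩ Set.Icc 0 t) with ha_def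
  set b := sInf (S ∩ Set.Icc t 1) with hb_def
  have hane : (S ∩ Set.Icc 0 t).Nonempty := ⟨0, h0S, le_refl 0, ht.1⟩
  have hbne : (S ∩ Set.Icc t 1).Nonempty := ⟨1, h1S, ht.2, le_refl 1⟩
  have habdd : BddAbove (S ∩ Set.Icc 0 t) := ⟨t, fun y hy => hy.2.2⟩
  have hbbdd : BddBelow (S ∩ Set.Icc t 1) := ⟨t, fun y hy => hy.2.1⟩
  have haclosed : IsClosed (S ∩ Set.Icc 0 t) := hSclosed.inter isClosed_Icc
  have hbclosed : IsClosed (S ∩ Set.Icc t 1) := hSclosed.inter isClosed_Icc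
  have haS : a ∈ S ∩ Set.Icc 0 t := haclosed.csSup_mem hane habdd
  have hbS : b ∈ S ∩ Set.Icc t 1 := hbclosed.csInf_mem hbne hbbdd
  have hat : a < t := lt_of_le_of_ne haS.2.2 (fun h => htS (h ▸ haS.1))
  have htb : t < b := lt_of_le_of_ne (hbS.2.1) (fun h => htS (h ▸ hbS.1))
  have hab : a < b := hat.trans htb
  have haI : a ∈ Set.Icc (0:ℝ) 1 := haS.1.1
  have hbI : b ∈ Set.Icc (0:ℝ) 1 := hbS.1.1
  -- interior of (a,b) avoids γ₁
  have hkey : ∀ s ∈ Set.Ioo a b, γ₂.toFun s ∉ γ₁.image := by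
    intro s hs hmem
    have hsI : s ∈ Set.Icc (0:ℝ) 1 :=
      ⟨haI.1.trans hs.1.le, hs.2.le.trans hbI.2⟩
    rcases le_or_gt s t with hst | hts
    · exact absurd (le_csSup habdd ⟨⟨hsI, hmem⟩, haI.1.trans hs.1.le, hst⟩)
        (not_le_of_gt hs.1)
    · exact absurd (csInf_le hbbdd ⟨⟨hsI, hmem⟩, hts.le, hs.2.le.trans hbI.2⟩)
        (not_le_of_gt hs.2)
  obtain ⟨u, huI, hu⟩ := haS.1.2
  obtain ⟨v, hvI, hv⟩ := hbS.1.2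
  have hab2 : γ₂.toFun a ≠ γ₂.toFun b := fun h => (ne_of_lt hab) (γ₂.inj haI hbI h)
  have huv : u ≠ v := fun h => hab2 (by rw [← hu, ← hv, h])
  have hminI : min u v ∈ Set.Icc (0:ℝ) 1 :=
    ⟨le_min huI.1 hvI.1, (min_le_left u v).trans huI.2⟩
  have hmaxI : max u v ∈ Set.Icc (0:ℝ) 1 :=
    ⟨huI.1.trans (le_max_left u v), max_le huI.2 hvI.2⟩
  have hends' : ({γ₁.toFun (min u v), γ₁.toFun (max u v)} : Set Y)
      = {γ₂.toFun a, γ₂.toFun b} := by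
    rcases le_total u v with h | h
    · rw [min_eq_left h, max_eq_right h, ← hu, ← hv]
    · rw [min_eq_right h, max_eq_left h, ← hu, ← hv, Set.pair_comm]
  set T : TBigon γ₁ γ₂ :=
    ⟨min u v, max u v, a, b, hminI, hmaxI, haI, hbI, min_le_max, hab.le, hends'⟩
    with hT
  have hside₁ : T.side₁ ⊆ γ₁.image := by
    rintro y ⟨s, hs, rfl⟩
    exact ⟨s, ⟨hminI.1.trans hs.1, hs.2.trans hmaxI.2⟩, rfl⟩
  have hepts : T.endpoints = {γ₂.toFun a, γ₂.toFun b} := hends'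
  have hsimple : T.Simple := by
    rw [TBigon.Simple, hepts]
    apply Set.Subset.antisymm
    · rintro y ⟨hy1, s, hs, rfl⟩
      have hs' : s ∈ Set.Icc a b := hs
      rcases eq_or_lt_of_le hs'.1 with h | h
      · exact Set.mem_insert_iff.mpr (Or.inl (by rw [← h]))
      rcases eq_or_lt_of_le hs'.2 with h' | h'
      · exact Set.mem_insert_iff.mpr (Or.inr (by rw [h']; exact Set.mem_singleton _))
      exact absurd (hside₁ hy1) (hkey s ⟨h, h'⟩)
    · rintro y (rfl | rfl)
      · constructor
        · exact ⟨u, ⟨min_le_left u v, le_max_left u v⟩, hu⟩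
        · exact ⟨a, ⟨le_refl a, hab.le⟩, rfl⟩
      · constructor
        · exact ⟨v, ⟨min_le_right u v, le_max_right u v⟩, hv⟩
        · exact ⟨b, ⟨hab.le, le_refl b⟩, rfl⟩
  have hnt : T.Nontrivial := by
    rintro ⟨p, hp⟩
    have h1' : γ₂.toFun a ∈ T.carrier := Or.inr ⟨a, ⟨le_refl a, hab.le⟩, rfl⟩
    have h2' : γ₂.toFun b ∈ T.carrier := Or.inr ⟨b, ⟨hab.le, le_refl b⟩, rfl⟩
    rw [hp] at h1' h2'
    exact hab2 (h1'.trans h2'.symm)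
  obtain ⟨B', hB', hTB'⟩ := hbig T hsimple hnt
  have hBB' : B = B' := by
    by_contra hne
    have hsub := hT1 B hB B' hB' hne
    have hmema : γ₂.toFun a ∈ B ∩ B' :=
      ⟨h1 ⟨u, huI, hu⟩, hTB' (Or.inr ⟨a, ⟨le_refl a, hab.le⟩, rfl⟩)⟩
    have hmemb : γ₂.toFun b ∈ B ∩ B' :=
      ⟨h1 ⟨v, hvI, hv⟩, hTB' (Or.inr ⟨b, ⟨hab.le, le_refl b⟩, rfl⟩)⟩
    exact hab2 (hsub hmema hmemb)
  rw [hBB']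
  exact hTB' (Or.inr ⟨t, ⟨hat.le, htb.le⟩, rfl⟩)
end

section
/- Let Y be a metric space and let 𝓑 be a collection of closed subsets of Y satisfying property (T1). Let 𝓛₁ and 𝔤₁ be two topological arcs with common endpoints u, v, and let 𝓛₂ and 𝔤₂ be two, possibly identical, topological arcs with common endpoints v, w. Assume: (1) 𝓛₁ ∩ 𝓛₂ = {v}; (2) 𝔤₁ ∩ 𝔤₂ contains a point a ≠ v; (3) every non-trivial simple 𝒯-bigon formed either by 𝔤₁ and 𝔤₂, or by 𝔤₁ and 𝓛₁, or by 𝔤₂ and 𝓛₂, is contained in some member of 𝓑. Then the 𝒯-bigon formed by 𝔤₁ and 𝔤₂ with endpoints a and v is contained in some member of 𝓑. -/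
open Set Metric

/-! Let `X` be the union of the two sides of the bigon. Two members of `𝓑` that are both
neighbourhoods within `X` of a non-isolated point share two points, hence coincide by (T₁); so it
suffices that each point of the connected set `X \ {v}` has a neighbourhood in `X` inside a member
of `𝓑`, which, being closed, then also contains `v`. A point on one side only lies in a gap
between common points, and that gap is closed off by a simple bigon. A common point `x ≠ v` lies
off `L₁` or off `L₂`, say off `L₁`; then `g₁` near `x` lies in a simple bigon of `g₁` and `L₁`, and
the member containing it also contains `g₂` near `x`. -/

open Filter Topology

theorem PropT1.eq_of_mem_of_mem {Y : Type*} {𝓑 : Set (Set Y)} (hT1 : PropT1 𝓑) {B B' : Set Y}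
    (hB : B ∈ 𝓑) (hB' : B' ∈ 𝓑) {x y : Y} (hxy : x ≠ y) (hx : x ∈ B ∩ B') (hy : y ∈ B ∩ B') :
    B = B' := by
  by_contra hne
  exact hxy (hT1 B hB B' hB' hne hx hy)

section Topology

variable {Y : Type*} [TopologicalSpace Y] {𝓑 : Set (Set Y)}

theorem PropT1.eq_of_mem_nhdsWithin (hT1 : PropT1 𝓑) {X : Set Y} (hX : Preperfect X) {x : Y}
    (hx : x ∈ X) {B B' : Set Y} (hB : B ∈ 𝓑) (hB' : B' ∈ 𝓑) (hxB : B ∈ 𝓝[X] x)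
    (hxB' : B' ∈ 𝓝[X] x) : B = B' := by
  obtain ⟨U, hU, hUX⟩ := mem_nhdsWithin_iff_exists_mem_nhds_inter.1 (inter_mem hxB hxB')
  obtain ⟨y, hy, hyx⟩ := accPt_iff_nhds.1 (hX x hx) U hU
  exact hT1.eq_of_mem_of_mem hB hB' hyx (hUX hy) ⟨mem_of_mem_nhdsWithin hx hxB,
    mem_of_mem_nhdsWithin hx hxB'⟩

theorem IsPreconnected.exists_subset_of_forall_mem_nhdsWithin (hT1 : PropT1 𝓑) {X : Set Y}
    (hX : IsPreconnected X) (hXp : Preperfect X) {x₀ : Y} (hx₀ : x₀ ∈ X)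
    (hloc : ∀ x ∈ X, ∃ B ∈ 𝓑, B ∈ 𝓝[X] x) : ∃ B ∈ 𝓑, X ⊆ B := by
  obtain ⟨B₀, hB₀, hx₀B₀⟩ := hloc x₀ hx₀
  refine ⟨B₀, hB₀, fun y hy => ?_⟩
  obtain ⟨B, hB, hx₀B, hyB⟩ := hX.induction₂ (fun x y => ∃ B ∈ 𝓑, B ∈ 𝓝[X] x ∧ B ∈ 𝓝[X] y)
    (fun x hx => by
      obtain ⟨B, hB, hxB⟩ := hloc x hx
      filter_upwards [eventually_eventually_nhdsWithin.2 hxB] with y hyB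
      exact ⟨B, hB, hxB, hyB⟩)
    (fun x y z _ hy _ ⟨B, hB, hxB, hyB⟩ ⟨B', hB', hyB', hzB'⟩ =>
      ⟨B, hB, hxB, hT1.eq_of_mem_nhdsWithin hXp hy hB' hB hyB' hyB ▸ hzB'⟩)
    (fun _ _ _ _ ⟨B, hB, hxB, hyB⟩ => ⟨B, hB, hyB, hxB⟩) hx₀ hy
  rw [hT1.eq_of_mem_nhdsWithin hXp hx₀ hB₀ hB hx₀B₀ hx₀B]
  exact mem_of_mem_nhdsWithin hy hyB

theorem IsCompact.image_inter_mem_nhdsWithin_image {X : Type*} [TopologicalSpace X] [T2Space Y]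
    {f : X → Y} {K V : Set X} (hK : IsCompact K) (hf : ContinuousOn f K) (hinj : InjOn f K)
    {s : X} (hs : s ∈ K) (hV : V ∈ 𝓝 s) : f '' (K ∩ V) ∈ 𝓝[f '' K] (f s) := by
  have hC : IsClosed (f '' (K \ interior V)) :=
    ((hK.diff isOpen_interior).image_of_continuousOn (hf.mono sdiff_subset)).isClosed
  refine mem_nhdsWithin.2 ⟨_, hC.isOpen_compl, ?_, ?_⟩
  · rintro ⟨k, ⟨hk, hkV⟩, hks⟩
    exact hkV (hinj hk hs hks ▸ mem_interior_iff_mem_nhds.2 hV)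
  · rintro _ ⟨hy, k, hk, rfl⟩
    exact ⟨k, ⟨hk, interior_subset (by_contra fun h => hy ⟨k, ⟨hk, h⟩, rfl⟩)⟩, rfl⟩

end Topology

theorem IsClosed.exists_Ioo_disjoint {K : Set ℝ} (hK : IsClosed K) {a b s : ℝ} (ha : a ∈ K)
    (hb : b ∈ K) (hs : s ∈ Icc a b) (hsK : s ∉ K) :
    ∃ c ∈ K, ∃ d ∈ K, s ∈ Ioo c d ∧ Disjoint (Ioo c d) K := by
  have hl : BddAbove (K ∩ Iic s) := ⟨s, fun _ h => h.2⟩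
  have hr : BddBelow (K ∩ Ici s) := ⟨s, fun _ h => h.2⟩
  obtain ⟨hcK, hcs⟩ := (hK.inter isClosed_Iic).csSup_mem ⟨a, ha, hs.1⟩ hl
  obtain ⟨hdK, hsd⟩ := (hK.inter isClosed_Ici).csInf_mem ⟨b, hb, hs.2⟩ hr
  refine ⟨_, hcK, _, hdK, ⟨hcs.lt_of_ne ?_, lt_of_le_of_ne hsd ?_⟩, ?_⟩
  · rintro h; exact hsK (h ▸ hcK)
  · rintro h; exact hsK (h ▸ hdK)
  · refine disjoint_left.2 fun t ⟨hct, htd⟩ htK => ?_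
    rcases le_total t s with h | h
    · exact (le_csSup hl ⟨htK, h⟩).not_gt hct
    · exact (csInf_le hr ⟨htK, h⟩).not_gt htd

section Arcs

variable {Y : Type*} [MetricSpace Y] {𝓑 : Set (Set Y)}

namespace TopArc

theorem isPreconnected_image_Icc_diff (γ : TopArc Y) {s t : ℝ} (hst : s ≤ t)
    (h : Icc s t ⊆ Icc 0 1) {p : Y} (hp : p ∈ ({γ.toFun s, γ.toFun t} : Set Y)) :
    IsPreconnected (γ.toFun '' Icc s t \ {p}) := by
  have hcont := γ.cont.mono h
  rcases hp with rfl | rfl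
  · rw [← image_singleton, ← (γ.inj.mono h).image_sdiff_subset
      (singleton_subset_iff.2 (left_mem_Icc.2 hst)), Icc_sdiff_left]
    exact isPreconnected_Ioc.image _ (hcont.mono Ioc_subset_Icc_self)
  · rw [← image_singleton, ← (γ.inj.mono h).image_sdiff_subset
      (singleton_subset_iff.2 (right_mem_Icc.2 hst)), Icc_sdiff_right]
    exact isPreconnected_Ico.image _ (hcont.mono Ico_subset_Icc_self)

theorem isClosed_image_Icc (γ : TopArc Y) {s t : ℝ} (h : Icc s t ⊆ Icc 0 1) :
    IsClosed (γ.toFun '' Icc s t) :=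
  (isCompact_Icc.image_of_continuousOn (γ.cont.mono h)).isClosed

theorem image_mem_nhdsWithin {γ : TopArc Y} {s c d : ℝ} (hs : s ∈ Ioo c d) (hc : 0 ≤ c)
    (hd : d ≤ 1) :
    γ.toFun '' Icc c d ∈ 𝓝[γ.image] (γ.toFun s) := by
  have := isCompact_Icc.image_inter_mem_nhdsWithin_image γ.cont γ.inj
    (Ioo_subset_Icc_self.trans (Icc_subset_Icc hc hd) hs) (Icc_mem_nhds hs.1 hs.2)
  rwa [inter_eq_right.2 (Icc_subset_Icc hc hd)] at this

theorem exists_gap (γ L : TopArc Y) {a b a' b' : ℝ} (hI : Icc a b ⊆ Icc 0 1)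
    (hJ : Icc a' b' ⊆ Icc 0 1) (ha : γ.toFun a ∈ L.toFun '' Icc a' b')
    (hb : γ.toFun b ∈ L.toFun '' Icc a' b') {t : ℝ} (ht : t ∈ Icc a b)
    (htJ : γ.toFun t ∉ L.toFun '' Icc a' b') :
    ∃ c d, c ∈ Icc a b ∧ d ∈ Icc a b ∧ γ.toFun c ∈ L.toFun '' Icc a' b' ∧
      γ.toFun d ∈ L.toFun '' Icc a' b' ∧ t ∈ Ioo c d ∧
      ∀ r ∈ Ioo c d, γ.toFun r ∉ L.toFun '' Icc a' b' := by
  have hK : IsClosed (Icc a b ∩ γ.toFun ⁻¹' (L.toFun '' Icc a' b')) :=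
    (γ.cont.mono hI).preimage_isClosed_of_isClosed isClosed_Icc (L.isClosed_image_Icc hJ)
  obtain ⟨c, ⟨hc, hγc⟩, d, ⟨hd, hγd⟩, htcd, hgap⟩ := hK.exists_Ioo_disjoint
    ⟨left_mem_Icc.2 (ht.1.trans ht.2), ha⟩ ⟨right_mem_Icc.2 (ht.1.trans ht.2), hb⟩ ht
    (fun h => htJ h.2)
  refine ⟨c, d, hc, hd, hγc, hγd, htcd, fun r hr hrJ => disjoint_left.1 hgap hr ⟨?_, hrJ⟩⟩
  exact Icc_subset_Icc hc.1 hd.2 (Ioo_subset_Icc_self hr)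

end TopArc

def SimpleBigonsIn (𝓑 : Set (Set Y)) (γ₁ γ₂ : TopArc Y) : Prop :=
  ∀ T : TBigon γ₁ γ₂, T.Simple → T.Nontrivial → ∃ B ∈ 𝓑, T.carrier ⊆ B

namespace TBigon

variable {γ₁ γ₂ : TopArc Y} (T : TBigon γ₁ γ₂)

def swap : TBigon γ₂ γ₁ :=
  ⟨T.a₂, T.b₂, T.a₁, T.b₁, T.ha₂, T.hb₂, T.ha₁, T.hb₁, T.hle₂, T.hle₁, T.ends_eq.symm⟩

theorem endpoints_swap : T.swap.endpoints = T.endpoints := T.ends_eq.symm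

theorem carrier_swap : T.swap.carrier = T.carrier := union_comm _ _

theorem Simple.swap {T : TBigon γ₁ γ₂} (h : T.Simple) : T.swap.Simple := by
  rw [Simple, endpoints_swap, ← h]
  exact inter_comm _ _

theorem Nontrivial.swap {T : TBigon γ₁ γ₂} (h : T.Nontrivial) : T.swap.Nontrivial := by
  rwa [Nontrivial, carrier_swap]

theorem Icc₁_subset : Icc T.a₁ T.b₁ ⊆ Icc 0 1 := Icc_subset_Icc T.ha₁.1 T.hb₁.2

theorem Icc₂_subset : Icc T.a₂ T.b₂ ⊆ Icc 0 1 := T.swap.Icc₁_subset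

theorem endpoints_subset_side₁ : T.endpoints ⊆ T.side₁ := by
  rintro _ (rfl | rfl)
  exacts [⟨_, left_mem_Icc.2 T.hle₁, rfl⟩, ⟨_, right_mem_Icc.2 T.hle₁, rfl⟩]

theorem endpoints_subset_side₂ : T.endpoints ⊆ T.side₂ :=
  T.endpoints_swap ▸ T.swap.endpoints_subset_side₁

theorem isPreconnected_carrier : IsPreconnected T.carrier :=
  .union _ (T.endpoints_subset_side₁ (Or.inl rfl)) (T.endpoints_subset_side₂ (Or.inl rfl))
    (isPreconnected_Icc.image _ (γ₁.cont.mono T.Icc₁_subset))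
    (isPreconnected_Icc.image _ (γ₂.cont.mono T.Icc₂_subset))

theorem isPreconnected_side₁_diff {p : Y} (hp : p ∈ T.endpoints) :
    IsPreconnected (T.side₁ \ {p}) :=
  γ₁.isPreconnected_image_Icc_diff T.hle₁ T.Icc₁_subset hp

theorem isPreconnected_carrier_diff {p q : Y} (hp : p ∈ T.endpoints) (hq : q ∈ T.endpoints)
    (hqp : q ≠ p) : IsPreconnected (T.carrier \ {p}) := by
  rw [carrier, union_sdiff_distrib]
  exact .union q ⟨T.endpoints_subset_side₁ hq, hqp⟩ ⟨T.endpoints_subset_side₂ hq, hqp⟩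
    (T.isPreconnected_side₁_diff hp)
    (T.swap.isPreconnected_side₁_diff (T.endpoints_swap ▸ hp))

end TBigon

theorem SimpleBigonsIn.symm {γ₁ γ₂ : TopArc Y} (h : SimpleBigonsIn 𝓑 γ₁ γ₂) :
    SimpleBigonsIn 𝓑 γ₂ γ₁ := fun T hs hn => by
  simpa only [TBigon.carrier_swap] using h T.swap hs.swap hn.swap

namespace SimpleBigonsIn

variable {γ L : TopArc Y}

theorem exists_of_gap (h : SimpleBigonsIn 𝓑 γ L) {c d a' b' : ℝ} (hc : c ∈ Icc (0 : ℝ) 1)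
    (hd : d ∈ Icc (0 : ℝ) 1) (hcd : c < d) (hJ : Icc a' b' ⊆ Icc 0 1)
    (hγc : γ.toFun c ∈ L.toFun '' Icc a' b') (hγd : γ.toFun d ∈ L.toFun '' Icc a' b')
    (hgap : ∀ r ∈ Ioo c d, γ.toFun r ∉ L.toFun '' Icc a' b') :
    ∃ B ∈ 𝓑, γ.toFun '' Icc c d ⊆ B ∧ ∃ P ⊆ B ∩ L.toFun '' Icc a' b',
      IsPreconnected P ∧ γ.toFun c ∈ P ∧ γ.toFun d ∈ P := by
  obtain ⟨l, hl, hlc⟩ := hγc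
  obtain ⟨m, hm, hmd⟩ := hγd
  have hlm : uIcc l m ⊆ Icc a' b' := ordConnected_Icc.uIcc_subset hl hm
  let T : TBigon γ L :=
    { a₁ := c, b₁ := d, a₂ := l ⊓ m, b₂ := l ⊔ m, ha₁ := hc, hb₁ := hd
      ha₂ := hJ (hlm (left_mem_Icc.2 inf_le_sup)), hb₂ := hJ (hlm (right_mem_Icc.2 inf_le_sup))
      hle₁ := hcd.le, hle₂ := inf_le_sup
      ends_eq := by
        rcases le_total l m with hlm | hml
        · rw [inf_of_le_left hlm, sup_of_le_right hlm, hlc, hmd]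
        · rw [inf_of_le_right hml, sup_of_le_left hml, hlc, hmd, pair_comm] }
  have hsimple : T.Simple := by
    refine (subset_antisymm ?_ (subset_inter T.endpoints_subset_side₁ T.endpoints_subset_side₂))
    rintro _ ⟨⟨r, hr, rfl⟩, hrL⟩
    have hr' : r ∈ Icc c d \ Ioo c d := ⟨hr, fun h' => hgap r h' (image_mono hlm hrL)⟩
    rw [Icc_sdiff_Ioo_same hcd.le] at hr'
    rcases hr' with rfl | rfl
    exacts [Or.inl rfl, Or.inr rfl]
  have hnt : T.Nontrivial := by
    rintro ⟨p, hp⟩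
    have hc' : γ.toFun c ∈ T.carrier := Or.inl ⟨c, left_mem_Icc.2 hcd.le, rfl⟩
    have hd' : γ.toFun d ∈ T.carrier := Or.inl ⟨d, right_mem_Icc.2 hcd.le, rfl⟩
    rw [hp] at hc' hd'
    exact hcd.ne (γ.inj hc hd (hc'.trans hd'.symm))
  obtain ⟨B, hB, hTB⟩ := h T hsimple hnt
  refine ⟨B, hB, subset_union_left.trans hTB, L.toFun '' uIcc l m,
    fun y hy => ⟨hTB (Or.inr hy), image_mono hlm hy⟩,
    isPreconnected_uIcc.image _ (L.cont.mono (hlm.trans hJ)),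
    ⟨l, left_mem_uIcc, hlc⟩, ⟨m, right_mem_uIcc, hmd⟩⟩

theorem exists_mem_nhdsWithin_of_notMem (h : SimpleBigonsIn 𝓑 γ L) {a b a' b' : ℝ}
    (hI : Icc a b ⊆ Icc 0 1) (hJ : Icc a' b' ⊆ Icc 0 1) (ha : γ.toFun a ∈ L.toFun '' Icc a' b')
    (hb : γ.toFun b ∈ L.toFun '' Icc a' b') {t : ℝ} (ht : t ∈ Icc a b)
    (htJ : γ.toFun t ∉ L.toFun '' Icc a' b') : ∃ B ∈ 𝓑, B ∈ 𝓝[γ.image] (γ.toFun t) := by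
  obtain ⟨c, d, hc, hd, hγc, hγd, htcd, hgap⟩ := γ.exists_gap L hI hJ ha hb ht htJ
  obtain ⟨B, hB, hcdB, -⟩ :=
    h.exists_of_gap (hI hc) (hI hd) (htcd.1.trans htcd.2) hJ hγc hγd hgap
  exact ⟨B, hB, mem_of_superset (TopArc.image_mem_nhdsWithin htcd (hI hc).1 (hI hd).2) hcdB⟩

/-- Each gap of the common points next to `τ` is closed by a simple bigon, which shares with `B`
two points of `L` and hence is `B`. -/
theorem mem_nhdsWithin_image (hT1 : PropT1 𝓑) (h : SimpleBigonsIn 𝓑 γ L) {a b a' b' : ℝ}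
    (hI : Icc a b ⊆ Icc 0 1) (hJ : Icc a' b' ⊆ Icc 0 1) (ha : γ.toFun a ∈ L.toFun '' Icc a' b')
    (hb : γ.toFun b ∈ L.toFun '' Icc a' b') {τ : ℝ} (hτ : τ ∈ Icc a b)
    (hτJ : γ.toFun τ ∈ L.toFun '' Icc a' b') {B : Set Y} (hB : B ∈ 𝓑)
    (hBτ : B ∈ 𝓝[L.toFun '' Icc a' b'] (γ.toFun τ)) :
    B ∈ 𝓝[γ.toFun '' Icc a b] (γ.toFun τ) := by
  obtain ⟨U, hU, hτU, hUB⟩ := mem_nhdsWithin.1 hBτ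
  obtain ⟨ε, hε, hεU⟩ := Metric.mem_nhdsWithin_iff.1
    ((γ.cont.mono hI τ hτ).preimage_mem_nhdsWithin (hU.mem_nhds hτU))
  refine mem_of_superset (isCompact_Icc.image_inter_mem_nhdsWithin_image (γ.cont.mono hI)
    (γ.inj.mono hI) hτ (ball_mem_nhds τ hε)) ?_
  rintro _ ⟨t, ⟨ht, htε⟩, rfl⟩
  by_cases htJ : γ.toFun t ∈ L.toFun '' Icc a' b'
  · exact hUB ⟨hεU ⟨htε, ht⟩, htJ⟩
  obtain ⟨c, d, hc, hd, hγc, hγd, htcd, hgap⟩ := γ.exists_gap L hI hJ ha hb ht htJ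
  obtain ⟨B', hB', hcdB', P, hPB', hP, hcP, hdP⟩ :=
    h.exists_of_gap (hI hc) (hI hd) (htcd.1.trans htcd.2) hJ hγc hγd hgap
  obtain ⟨e, he, heP, heε⟩ : ∃ e ∈ Icc a b, γ.toFun e ∈ P ∧ e ∈ ball τ ε := by
    have hball := (convex_ball τ ε).ordConnected
    have hτε : τ ∈ ball τ ε := mem_ball_self hε
    rcases le_or_gt τ c with hτc | hcτ
    · exact ⟨c, hc, hcP, hball.out hτε htε ⟨hτc, htcd.1.le⟩⟩
    · have hdτ : d ≤ τ := not_lt.1 fun hτd => hgap τ ⟨hcτ, hτd⟩ hτJ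
      exact ⟨d, hd, hdP, hball.out htε hτε ⟨htcd.2.le, hdτ⟩⟩
  have hγcd : γ.toFun c ≠ γ.toFun d := (γ.inj.mono hI).ne hc hd (htcd.1.trans htcd.2).ne
  have heU : γ.toFun e ∈ U := hεU ⟨heε, he⟩
  obtain ⟨y, ⟨hyU, hyP⟩, hye⟩ := accPt_iff_nhds.1
    (hP.preperfect_of_nontrivial ⟨_, hcP, _, hdP, hγcd⟩ _ heP) U (hU.mem_nhds heU)
  have hBB' : B = B' := hT1.eq_of_mem_of_mem hB hB' hye
    ⟨hUB ⟨hyU, (hPB' hyP).2⟩, (hPB' hyP).1⟩ ⟨hUB ⟨heU, (hPB' heP).2⟩, (hPB' heP).1⟩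
  exact hBB' ▸ hcdB' ⟨t, Ioo_subset_Icc_self htcd, rfl⟩

end SimpleBigonsIn

namespace TBigon

variable {γ₁ γ₂ : TopArc Y} (T : TBigon γ₁ γ₂)

theorem exists_mem_nhdsWithin_carrier_of_notMem_side₂ (h : SimpleBigonsIn 𝓑 γ₁ γ₂) {x : Y}
    (hx₁ : x ∈ T.side₁) (hx₂ : x ∉ T.side₂) : ∃ B ∈ 𝓑, B ∈ 𝓝[T.carrier] x := by
  obtain ⟨s, hs, rfl⟩ := hx₁
  obtain ⟨B, hB, hBs⟩ := h.exists_mem_nhdsWithin_of_notMem T.Icc₁_subset T.Icc₂_subset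
    (T.endpoints_subset_side₂ (Or.inl rfl)) (T.endpoints_subset_side₂ (Or.inr rfl)) hs hx₂
  have hside₂ : 𝓝[T.side₂] (γ₁.toFun s) = ⊥ := notMem_closure_iff_nhdsWithin_eq_bot.1
    ((γ₂.isClosed_image_Icc T.Icc₂_subset).closure_eq ▸ hx₂)
  refine ⟨B, hB, ?_⟩
  rw [carrier, nhdsWithin_union, hside₂, sup_bot_eq]
  exact nhdsWithin_mono _ (image_mono T.Icc₁_subset) hBs

theorem mem_nhdsWithin_carrier_of_mem_nhdsWithin₂ (hT1 : PropT1 𝓑)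
    (h : SimpleBigonsIn 𝓑 γ₁ γ₂) {x : Y} (hx₁ : x ∈ T.side₁) (hx₂ : x ∈ T.side₂) {B : Set Y}
    (hB : B ∈ 𝓑) (hBx : B ∈ 𝓝[γ₂.image] x) : B ∈ 𝓝[T.carrier] x := by
  have hB₂ : B ∈ 𝓝[T.side₂] x := nhdsWithin_mono _ (image_mono T.Icc₂_subset) hBx
  obtain ⟨s, hs, rfl⟩ := hx₁
  rw [carrier, nhdsWithin_union]
  exact ⟨h.mem_nhdsWithin_image hT1 T.Icc₁_subset T.Icc₂_subset
    (T.endpoints_subset_side₂ (Or.inl rfl)) (T.endpoints_subset_side₂ (Or.inr rfl)) hs hx₂ hB hB₂,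
    hB₂⟩

theorem exists_mem_nhdsWithin_carrier (hT1 : PropT1 𝓑) (h : SimpleBigonsIn 𝓑 γ₁ γ₂) {x : Y}
    (hx : x ∈ T.carrier)
    (habs : x ∈ T.side₁ → x ∈ T.side₂ → ∃ B ∈ 𝓑, B ∈ 𝓝[γ₁.image] x ∨ B ∈ 𝓝[γ₂.image] x) :
    ∃ B ∈ 𝓑, B ∈ 𝓝[T.carrier] x := by
  by_cases hx₁ : x ∈ T.side₁ <;> by_cases hx₂ : x ∈ T.side₂
  · obtain ⟨B, hB, hB₁ | hB₂⟩ := habs hx₁ hx₂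
    · exact ⟨B, hB, T.carrier_swap ▸
        T.swap.mem_nhdsWithin_carrier_of_mem_nhdsWithin₂ hT1 h.symm hx₂ hx₁ hB hB₁⟩
    · exact ⟨B, hB, T.mem_nhdsWithin_carrier_of_mem_nhdsWithin₂ hT1 h hx₁ hx₂ hB hB₂⟩
  · exact T.exists_mem_nhdsWithin_carrier_of_notMem_side₂ h hx₁ hx₂
  · simpa only [carrier_swap] using
      T.swap.exists_mem_nhdsWithin_carrier_of_notMem_side₂ h.symm hx₂ hx₁
  · exact (hx.elim hx₁ hx₂).elim

theorem exists_carrier_subset (hT1 : PropT1 𝓑) (hclosed : ∀ B ∈ 𝓑, IsClosed B)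
    (h : SimpleBigonsIn 𝓑 γ₁ γ₂) {a v : Y} (hT : T.endpoints = {a, v}) (hav : a ≠ v)
    (habs : ∀ x ∈ T.side₁ ∩ T.side₂, x ≠ v →
      ∃ B ∈ 𝓑, B ∈ 𝓝[γ₁.image] x ∨ B ∈ 𝓝[γ₂.image] x) :
    ∃ B ∈ 𝓑, T.carrier ⊆ B := by
  have ha : a ∈ T.carrier := Or.inl (T.endpoints_subset_side₁ (hT ▸ Or.inl rfl))
  have hv : v ∈ T.carrier := Or.inl (T.endpoints_subset_side₁ (hT ▸ Or.inr rfl))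
  have hperf : Preperfect T.carrier :=
    T.isPreconnected_carrier.preperfect_of_nontrivial ⟨a, ha, v, hv, hav⟩
  have hperf' : Preperfect (T.carrier \ {v}) := by
    simpa only [sdiff_eq, inter_comm] using hperf.open_inter isOpen_compl_singleton
  obtain ⟨B, hB, hB'⟩ := (T.isPreconnected_carrier_diff (hT ▸ Or.inr rfl) (hT ▸ Or.inl rfl)
    hav).exists_subset_of_forall_mem_nhdsWithin hT1 hperf' ⟨ha, hav⟩ fun x hx => by
      obtain ⟨B, hB, hBx⟩ :=
        T.exists_mem_nhdsWithin_carrier hT1 h hx.1 fun h₁ h₂ => habs x ⟨h₁, h₂⟩ hx.2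
      exact ⟨B, hB, nhdsWithin_mono _ sdiff_subset hBx⟩
  refine ⟨B, hB, fun y hy => ?_⟩
  rcases eq_or_ne y v with rfl | hyv
  · exact (hclosed B hB).closure_subset_iff.2 hB'
      (mem_closure_iff_clusterPt.2 (accPt_principal_iff_clusterPt.1 (hperf y hy)))
  · exact hB' ⟨hy, hyv⟩

end TBigon

end Arcs

theorem braid_bigon_general {Y : Type*} [MetricSpace Y] (𝓑 : Set (Set Y))
    (hclosed : ∀ B ∈ 𝓑, IsClosed B) (hT1 : PropT1 𝓑)
    (u v w : Y) (L₁ g₁ L₂ g₂ : TopArc Y)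
    (hL₁0 : L₁.toFun 0 = u) (hL₁1 : L₁.toFun 1 = v)
    (hg₁0 : g₁.toFun 0 = u) (hg₁1 : g₁.toFun 1 = v)
    (hL₂0 : L₂.toFun 0 = v) (hL₂1 : L₂.toFun 1 = w)
    (hg₂0 : g₂.toFun 0 = v) (hg₂1 : g₂.toFun 1 = w)
    (h1 : L₁.image ∩ L₂.image = {v})
    (a : Y) (hav : a ≠ v)
    (h3a : ∀ T : TBigon g₁ g₂, T.Simple → T.Nontrivial → ∃ B ∈ 𝓑, T.carrier ⊆ B)
    (h3b : ∀ T : TBigon g₁ L₁, T.Simple → T.Nontrivial → ∃ B ∈ 𝓑, T.carrier ⊆ B)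
    (h3c : ∀ T : TBigon g₂ L₂, T.Simple → T.Nontrivial → ∃ B ∈ 𝓑, T.carrier ⊆ B) :
    ∀ T : TBigon g₁ g₂, T.endpoints = {a, v} → ∃ B ∈ 𝓑, T.carrier ⊆ B := by
  have h01 : (0 : ℝ) ∈ Icc (0 : ℝ) 1 := left_mem_Icc.2 zero_le_one
  have h11 : (1 : ℝ) ∈ Icc (0 : ℝ) 1 := right_mem_Icc.2 zero_le_one
  intro T hT
  refine T.exists_carrier_subset hT1 hclosed h3a hT hav ?_
  rintro _ ⟨⟨s, hs, rfl⟩, t, ht, hts⟩ hxv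
  by_cases hx₁ : g₁.toFun s ∈ L₁.image
  · have hx₂ : g₂.toFun t ∉ L₂.image := fun hx₂ => hxv (h1.subset ⟨hx₁, hts ▸ hx₂⟩)
    obtain ⟨B, hB, hBx⟩ := SimpleBigonsIn.exists_mem_nhdsWithin_of_notMem h3c subset_rfl
      subset_rfl ⟨0, h01, hL₂0.trans hg₂0.symm⟩ ⟨1, h11, hL₂1.trans hg₂1.symm⟩
      (T.Icc₂_subset ht) hx₂
    exact ⟨B, hB, Or.inr (hts ▸ hBx)⟩
  · obtain ⟨B, hB, hBx⟩ := SimpleBigonsIn.exists_mem_nhdsWithin_of_notMem h3b subset_rfl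
      subset_rfl ⟨0, h01, hL₁0.trans hg₁0.symm⟩ ⟨1, h11, hL₁1.trans hg₁1.symm⟩
      (T.Icc₁_subset hs) hx₁
    exact ⟨B, hB, Or.inl hBx⟩

/-- **Proposition.** Let `𝓑` be a collection of closed subsets of `Y` with property
(T₁). Let `L₁`, `g₁` be arcs from `u` to `v` and `L₂`, `g₂` arcs from `v` to `w` with
`L₁ ∩ L₂ = {v}`, and let `a ≠ v` be a common point of `g₁` and `g₂`.  If every
non-trivial simple `𝒯`-bigon formed by `g₁` and `g₂`, by `g₁` and `L₁`, or by `g₂` and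
`L₂` is contained in a member of `𝓑`, then the `𝒯`-bigon formed by `g₁` and `g₂`
with endpoints `a` and `v` is contained in a member of `𝓑`. -/
theorem braid_bigon {Y : Type*} [MetricSpace Y] (𝓑 : Set (Set Y))
    (hclosed : ∀ B ∈ 𝓑, IsClosed B) (hT1 : PropT1 𝓑)
    (u v w : Y) (L₁ g₁ L₂ g₂ : TopArc Y)
    (hL₁0 : L₁.toFun 0 = u) (hL₁1 : L₁.toFun 1 = v)
    (hg₁0 : g₁.toFun 0 = u) (hg₁1 : g₁.toFun 1 = v)
    (hL₂0 : L₂.toFun 0 = v) (hL₂1 : L₂.toFun 1 = w)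
    (hg₂0 : g₂.toFun 0 = v) (hg₂1 : g₂.toFun 1 = w)
    (h1 : L₁.image ∩ L₂.image = {v})
    (a : Y) (ha : a ∈ g₁.image ∩ g₂.image) (hav : a ≠ v)
    (h3a : ∀ T : TBigon g₁ g₂, T.Simple → T.Nontrivial → ∃ B ∈ 𝓑, T.carrier ⊆ B)
    (h3b : ∀ T : TBigon g₁ L₁, T.Simple → T.Nontrivial → ∃ B ∈ 𝓑, T.carrier ⊆ B)
    (h3c : ∀ T : TBigon g₂ L₂, T.Simple → T.Nontrivial → ∃ B ∈ 𝓑, T.carrier ⊆ B) :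
    ∀ T : TBigon g₁ g₂, T.endpoints = {a, v} → ∃ B ∈ 𝓑, T.carrier ⊆ B :=
  braid_bigon_general 𝓑 hclosed hT1 u v w L₁ g₁ L₂ g₂ hL₁0 hL₁1 hg₁0 hg₁1 hL₂0 hL₂1 hg₂0 hg₂1 h1 a
    hav h3a h3b h3c
end

section
/- Let [x,y] and [y,z] be geodesic segments in a metric space sharing the endpoint y, such that dist(x, [y,z]) = dist(x,y). Then for every θ > 0, both the distance from [x,y] ∖ B(y, 2θ) to [y,z] and the distance from [y,z] ∖ B(y, 2θ) to [x,y] are at least θ. -/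
open Set Metric

/-! ### Basic metric notions: tubular neighborhoods, geodesics -/

variable {X : Type*} [MetricSpace X]

/-- **Lemma.** Let `[x,y]` and `[y,z]` be geodesic segments with
`dist(x,[y,z]) = dist(x,y)`.  Then for every `θ > 0`, both the distance from
`[x,y] ∖ B(y,2θ)` to `[y,z]` and the distance from `[y,z] ∖ B(y,2θ)` to `[x,y]` are
at least `θ`. -/
theorem consecutive_geodesics_distance (x y z : X) (γ δ' : ℝ → X)
    (hγ : IsGeodesicParam γ (dist x y)) (hγ0 : γ 0 = x) (hγ1 : γ (dist x y) = y)
    (hδ : IsGeodesicParam δ' (dist y z)) (hδ0 : δ' 0 = y) (hδ1 : δ' (dist y z) = z)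
    (hmin : Metric.infDist x (δ' '' Set.Icc 0 (dist y z)) = dist x y)
    (θ : ℝ) (hθ : 0 < θ) :
    (∀ p ∈ γ '' Set.Icc 0 (dist x y), 2 * θ ≤ dist p y →
      ∀ q ∈ δ' '' Set.Icc 0 (dist y z), θ ≤ dist p q) ∧
    (∀ p ∈ δ' '' Set.Icc 0 (dist y z), 2 * θ ≤ dist p y →
      ∀ q ∈ γ '' Set.Icc 0 (dist x y), θ ≤ dist p q) := by
  set L := dist x y with hL
  set M := dist y z with hM
  have hkey : ∀ q ∈ δ' '' Set.Icc 0 M, L ≤ dist x q := by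
    intro q hq
    have := Metric.infDist_le_dist_of_mem (x := x) hq
    rw [hmin] at this
    exact this
  constructor
  · rintro p ⟨s, hs, rfl⟩ hpy q hq
    have hdxp : dist x (γ s) = s := by
      have := hγ.2 0 ⟨le_refl 0, hγ.1⟩ s hs
      rw [hγ0] at this
      rw [this]; simp [abs_of_nonneg hs.1]
    have h1 : L ≤ dist x q := hkey q hq
    have h2 : dist x q ≤ dist x (γ s) + dist (γ s) q := dist_triangle _ _ _
    have hpyL : dist (γ s) y = L - s := by
      have := hγ.2 s hs L ⟨hγ.1, le_refl L⟩
      rw [hγ1] at this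
      rw [this, abs_of_nonpos (by linarith [hs.2])]
      ring
    have : dist (γ s) y ≤ dist (γ s) q := by
      rw [hpyL]; linarith
    linarith
  · rintro q ⟨t, ht, rfl⟩ hqy p ⟨s, hs, rfl⟩
    have hdxp : dist x (γ s) = s := by
      have := hγ.2 0 ⟨le_refl 0, hγ.1⟩ s hs
      rw [hγ0] at this
      rw [this]; simp [abs_of_nonneg hs.1]
    have hpyL : dist (γ s) y = L - s := by
      have := hγ.2 s hs L ⟨hγ.1, le_refl L⟩
      rw [hγ1] at this
      rw [this, abs_of_nonpos (by linarith [hs.2])]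
      ring
    have h1 : L ≤ dist x (δ' t) := hkey _ ⟨t, ht, rfl⟩
    have h2 : dist x (δ' t) ≤ dist x (γ s) + dist (γ s) (δ' t) := dist_triangle _ _ _
    have hqyt : dist (δ' t) y = t := by
      have := hδ.2 t ht 0 ⟨le_refl 0, hδ.1⟩
      rw [hδ0] at this
      rw [this, sub_zero, abs_of_nonneg ht.1]
    have h3 : dist (δ' t) y ≤ dist (δ' t) (γ s) + dist (γ s) y := dist_triangle _ _ _
    rw [dist_comm (γ s) (δ' t)] at h2
    rw [hqyt] at h3 hqy
    linarith
end

section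
/- Let P be a geodesic k-gon in a metric space with two consecutive edges [x,y] and [y,z] such that dist(x, [y,z]) = dist(x,y). If P is (θ,ν)-fat, then the (k+1)-gon P′ obtained from P by adding as a new vertex the point v ∈ [x,y] with dist(v,y) = νθ/2 (which exists since dist(x,y) ≥ νθ) is (θ, ν/2)-fat. -/
open Set Metric

/-! ### Basic metric notions: tubular neighborhoods, geodesics -/

variable {X : Type*} [MetricSpace X]

/-- The `(k+1)`-gon obtained from a `k`-gon by splitting its `i`-th edge at parameter `c`,
i.e. adding the point `P.edge i c` as a new vertex. -/
def PrePolygon.split {k : ℕ} (P : PrePolygon X k) (i : Fin k) (c : ℝ) :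
    PrePolygon X (k + 1) where
  edge := fun j =>
    if h : j.val < i.val then P.edge ⟨j.val, h.trans i.isLt⟩
    else if _h2 : j.val = i.val then P.edge i
    else if _h3 : j.val = i.val + 1 then fun t => P.edge i (c + t)
    else P.edge ⟨j.val - 1, by have h1 := j.isLt; have h2 := i.isLt; omega⟩
  len := fun j =>
    if h : j.val < i.val then P.len ⟨j.val, h.trans i.isLt⟩
    else if _h2 : j.val = i.val then c
    else if _h3 : j.val = i.val + 1 then P.len i - c
    else P.len ⟨j.val - 1, by have h1 := j.isLt; have h2 := i.isLt; omega⟩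

/-! Splitting `[x,y]` at `v` does not change the carrier, so (F1) only needs checking on the
halves `[x,v]` and `[v,y]`: a point far from the ends of a half is far from the rest of `[x,y]`
along the geodesic, and far from the other edges by (F1) for `P`. For (F2), `dist(x,y) ≥ νθ`
because `[y,z] ⊆ O_x`. The new vertex `v` is then `dist(v,y) = νθ/2`-far from `[y,z]`, since
`dist(x,[y,z]) = dist(x,y)`, and `(νθ - νθ/2)`-far from every other edge, since those are
`νθ`-far from `y`. The old vertices `x` and `y` are `νθ/2`-far from the halves not adjacent to
them because `dist(x,v), dist(v,y) ≥ νθ/2`. -/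

theorem finCycSucc_val {k : ℕ} (j : Fin k) :
    (finCycSucc j : ℕ) = if (j : ℕ) + 1 = k then 0 else (j : ℕ) + 1 := by
  unfold finCycSucc
  split_ifs with h
  · simp [h]
  · exact Nat.mod_eq_of_lt (by omega)

theorem finCycSucc_injective {k : ℕ} : Function.Injective (finCycSucc (k := k)) := by
  intro a b h
  have := congrArg Fin.val h
  simp only [finCycSucc_val] at this
  ext
  split_ifs at this <;> omega

theorem finCycSucc_castSucc {k : ℕ} (i : Fin k) : finCycSucc i.castSucc = i.succ := by
  ext
  simp only [finCycSucc_val, Fin.val_castSucc, Fin.val_succ]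
  split_ifs <;> omega

theorem Fin.val_predAbove {n : ℕ} (p : Fin n) (j : Fin (n + 1)) :
    (p.predAbove j : ℕ) = if (p : ℕ) < j then (j : ℕ) - 1 else j := by
  unfold Fin.predAbove
  split_ifs with h₁ h₂ <;> rw [Fin.lt_def, Fin.val_castSucc] at h₁ <;> simp only [Fin.val_pred, Fin.coe_castPred] <;> omega

theorem Fin.predAbove_ne_self {n : ℕ} {p : Fin n} {j : Fin (n + 1)} (h₁ : j ≠ p.castSucc)
    (h₂ : j ≠ p.succ) : p.predAbove j ≠ p := by
  simp only [ne_eq, Fin.ext_iff, Fin.val_predAbove, Fin.val_castSucc, Fin.val_succ] at *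
  split_ifs <;> omega

theorem nonadjacent_predAbove {k : ℕ} (i : Fin k) {m j : Fin (k + 1)} (hm : m ≠ i.succ)
    (hjm : j ≠ m) (hjm' : finCycSucc j ≠ m) :
    (i.predAbove j ≠ i.predAbove m ∧ finCycSucc (i.predAbove j) ≠ i.predAbove m) ∨
      (j = i.castSucc ∧ i.predAbove m = finCycSucc i) ∨ (j = i.succ ∧ m = i.castSucc) := by
  have := j.isLt; have := m.isLt
  simp only [ne_eq, Fin.ext_iff, Fin.val_predAbove, finCycSucc_val, Fin.val_castSucc,
    Fin.val_succ] at *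
  split_ifs at * <;> omega

namespace IsGeodesicParam

variable {γ : ℝ → X} {ℓ : ℝ}

theorem dist_eq_sub_s16 (hγ : IsGeodesicParam γ ℓ) {s t : ℝ} (hs : 0 ≤ s) (hst : s ≤ t)
    (ht : t ≤ ℓ) : dist (γ s) (γ t) = t - s := by
  rw [hγ.2 s ⟨hs, hst.trans ht⟩ t ⟨hs.trans hst, ht⟩, abs_sub_comm, abs_of_nonneg (by linarith)]

theorem injOn (hγ : IsGeodesicParam γ ℓ) : InjOn γ (Icc 0 ℓ) := by
  intro s hs t ht h
  have := hγ.2 s hs t ht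
  rwa [h, dist_self, eq_comm, abs_eq_zero, sub_eq_zero] at this

theorem le_infDist_diff_image_Icc (hγ : IsGeodesicParam γ ℓ) {C : Set X} {θ σ a b s : ℝ}
    (hC : γ '' Icc 0 ℓ ⊆ C) (ha : 0 ≤ a) (hb : b ≤ ℓ) (hab : 0 < a ∨ b < ℓ)
    (hθσ : θ ≤ σ * θ)
    (hfat : ∀ p ∈ γ '' Icc 0 ℓ, σ * θ ≤ dist p (γ 0) → σ * θ ≤ dist p (γ ℓ) →
      θ ≤ infDist p (C \ γ '' Icc 0 ℓ))
    (hs : s ∈ Icc a b) (hsa : σ * θ ≤ dist (γ s) (γ a)) (hsb : σ * θ ≤ dist (γ s) (γ b)) :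
    θ ≤ infDist (γ s) (C \ γ '' Icc a b) := by
  have hsub : Icc a b ⊆ Icc 0 ℓ := Icc_subset_Icc ha hb
  have hsℓ : s ∈ Icc 0 ℓ := hsub hs
  rw [dist_comm, hγ.dist_eq_sub_s16 ha hs.1 (hs.2.trans hb)] at hsa
  rw [hγ.dist_eq_sub_s16 hsℓ.1 hs.2 hb] at hsb
  have hne : (C \ γ '' Icc a b).Nonempty := by
    have hℓ := hγ.1
    obtain ⟨t, ht, htab⟩ : ∃ t ∈ Icc 0 ℓ, t ∉ Icc a b := by
      rcases hab with ha' | hb'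
      · exact ⟨0, ⟨le_rfl, hℓ⟩, fun h => by linarith [h.1]⟩
      · exact ⟨ℓ, ⟨hℓ, le_rfl⟩, fun h => by linarith [h.2]⟩
    exact ⟨γ t, hC (mem_image_of_mem γ ht), (hγ.injOn.mem_image_iff hsub ht).not.2 htab⟩
  rw [le_infDist hne]
  rintro q ⟨hqC, hqab⟩
  by_cases hq : q ∈ γ '' Icc 0 ℓ
  · obtain ⟨t, ht, rfl⟩ := hq
    have htab : t ∉ Icc a b := fun h => hqab (mem_image_of_mem γ h)
    rw [hγ.2 s hsℓ t ht, le_abs]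
    rcases not_and_or.1 htab with hta | htb
    · left; linarith [not_le.1 hta]
    · right; linarith [not_le.1 htb]
  · refine (hfat (γ s) (mem_image_of_mem γ hsℓ) ?_ ?_).trans (infDist_le_dist_of_mem ⟨hqC, hq⟩)
    · rw [dist_comm, hγ.dist_eq_sub_s16 le_rfl hsℓ.1 hsℓ.2]; linarith
    · rw [hγ.dist_eq_sub_s16 hsℓ.1 hsℓ.2 le_rfl]; linarith

end IsGeodesicParam

namespace PrePolygon

section Combinatorics

variable {α : Type*} {k : ℕ} (P : PrePolygon α k)

theorem mem_opp {i : Fin k} {q : α} :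
    q ∈ P.opp i ↔ ∃ j, j ≠ i ∧ finCycSucc j ≠ i ∧ q ∈ P.edgeSet j := by
  simp [opp, and_assoc]

theorem edgeSet_nonempty {i : Fin k} (h : 0 ≤ P.len i) : (P.edgeSet i).Nonempty :=
  (nonempty_Icc.2 h).image _

theorem three_le_of_opp_nonempty {i : Fin k} (h : (P.opp i).Nonempty) : 3 ≤ k := by
  obtain ⟨q, hq⟩ := h
  obtain ⟨j, hji, hji', -⟩ := P.mem_opp.1 hq
  have := i.isLt; have := j.isLt
  simp only [ne_eq, Fin.ext_iff, finCycSucc_val] at hji hji'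
  split_ifs at hji' <;> omega

theorem edgeSet_finCycSucc_subset_opp (hk : 3 ≤ k) (i : Fin k) :
    P.edgeSet (finCycSucc i) ⊆ P.opp i := by
  refine fun q hq => P.mem_opp.2 ⟨finCycSucc i, ?_, ?_, hq⟩ <;>
  · have := i.isLt
    simp only [ne_eq, Fin.ext_iff, finCycSucc_val]
    split_ifs <;> omega

theorem opp_nonempty (hk : 3 ≤ k) (hlen : ∀ j, 0 ≤ P.len j) (i : Fin k) : (P.opp i).Nonempty :=
  (P.edgeSet_nonempty (hlen _)).mono (P.edgeSet_finCycSucc_subset_opp hk i)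

variable (i : Fin k) (c : ℝ)

@[simp] theorem split_edge_castSucc : (P.split i c).edge i.castSucc = P.edge i := by
  simp [split]

@[simp] theorem split_len_castSucc : (P.split i c).len i.castSucc = c := by
  simp [split]

@[simp] theorem split_edge_succ : (P.split i c).edge i.succ = fun t => P.edge i (c + t) := by
  simp [split]

@[simp] theorem split_len_succ : (P.split i c).len i.succ = P.len i - c := by
  simp [split]

variable {i}

-- `i.predAbove` sends both halves `i.castSucc`, `i.succ` of the split edge to `i` and
-- reindexes the other edges and vertices.
theorem split_edge_of_ne {j : Fin (k + 1)} (h₁ : j ≠ i.castSucc) (h₂ : j ≠ i.succ) :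
    (P.split i c).edge j = P.edge (i.predAbove j) := by
  simp only [ne_eq, Fin.ext_iff, Fin.val_castSucc, Fin.val_succ] at h₁ h₂
  simp only [split]
  split_ifs <;> first | omega | (congr 1; ext; simp only [Fin.val_predAbove]; split_ifs <;> omega)

theorem split_len_of_ne {j : Fin (k + 1)} (h₁ : j ≠ i.castSucc) (h₂ : j ≠ i.succ) :
    (P.split i c).len j = P.len (i.predAbove j) := by
  simp only [ne_eq, Fin.ext_iff, Fin.val_castSucc, Fin.val_succ] at h₁ h₂
  simp only [split]
  split_ifs <;> first | omega | (congr 1; ext; simp only [Fin.val_predAbove]; split_ifs <;> omega)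

variable (i)

theorem split_edgeSet_castSucc : (P.split i c).edgeSet i.castSucc = P.edge i '' Icc 0 c := by
  simp [edgeSet]

theorem split_edgeSet_succ : (P.split i c).edgeSet i.succ = P.edge i '' Icc c (P.len i) := by
  rw [edgeSet, split_edge_succ, split_len_succ, ← image_image (P.edge i) (c + ·),
    image_const_add_Icc, add_zero, add_sub_cancel]

variable {i}

theorem split_edgeSet_of_ne {j : Fin (k + 1)} (h₁ : j ≠ i.castSucc) (h₂ : j ≠ i.succ) :
    (P.split i c).edgeSet j = P.edgeSet (i.predAbove j) := by
  rw [edgeSet, edgeSet, P.split_edge_of_ne c h₁ h₂, P.split_len_of_ne c h₁ h₂]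

variable {c}

theorem split_edgeSet_subset (hc₀ : 0 ≤ c) (hc : c ≤ P.len i) (j : Fin (k + 1)) :
    (P.split i c).edgeSet j ⊆ P.edgeSet (i.predAbove j) := by
  by_cases h₁ : j = i.castSucc
  · subst h₁
    rw [split_edgeSet_castSucc, Fin.predAbove_castSucc_self]
    exact image_mono (Icc_subset_Icc le_rfl hc)
  by_cases h₂ : j = i.succ
  · subst h₂
    rw [split_edgeSet_succ, Fin.predAbove_succ_self]
    exact image_mono (Icc_subset_Icc hc₀ le_rfl)
  rw [P.split_edgeSet_of_ne c h₁ h₂]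

theorem split_carrier (hc₀ : 0 ≤ c) (hc : c ≤ P.len i) : (P.split i c).carrier = P.carrier := by
  refine (iUnion_subset fun j => (P.split_edgeSet_subset hc₀ hc j).trans
    (subset_iUnion P.edgeSet _)).antisymm (iUnion_subset fun w => ?_)
  by_cases hw : w = i
  · subst hw
    rw [edgeSet, ← Icc_union_Icc_eq_Icc hc₀ hc, image_union, ← split_edgeSet_castSucc,
      ← split_edgeSet_succ]
    exact union_subset (subset_iUnion _ _) (subset_iUnion _ _)
  · have h₁ : i.castSucc.succAbove w ≠ i.castSucc := Fin.succAbove_ne _ _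
    have h₂ : i.castSucc.succAbove w ≠ i.succ := fun h => hw (by
      rw [← Fin.predAbove_succAbove i w, h, Fin.predAbove_succ_self])
    rw [← Fin.predAbove_succAbove i w, ← P.split_edgeSet_of_ne c h₁ h₂]
    exact subset_iUnion _ _

theorem split_len_nonneg (hlen : ∀ j, 0 ≤ P.len j) (hc₀ : 0 ≤ c) (hc : c ≤ P.len i)
    (j : Fin (k + 1)) : 0 ≤ (P.split i c).len j := by
  by_cases h₁ : j = i.castSucc
  · simpa [h₁] using hc₀
  by_cases h₂ : j = i.succ
  · simpa [h₂] using hc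
  rw [P.split_len_of_ne c h₁ h₂]
  exact hlen _

variable (c)

theorem split_vertex_succ : (P.split i c).vertex i.succ = P.edge i c := by
  simp [vertex]

theorem split_vertex_of_ne_succ {m : Fin (k + 1)} (hm : m ≠ i.succ) :
    (P.split i c).vertex m = P.vertex (i.predAbove m) := by
  by_cases h : m = i.castSucc
  · simp [vertex, h]
  · rw [vertex, P.split_edge_of_ne c h hm, vertex]

end Combinatorics

variable {k : ℕ}

def EdgesFat (P : PrePolygon X k) (θ σ : ℝ) : Prop :=
  ∀ i : Fin k, ∀ p ∈ P.edgeSet i, σ * θ ≤ dist p (P.edge i 0) →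
    σ * θ ≤ dist p (P.edge i (P.len i)) → θ ≤ infDist p (P.carrier \ P.edgeSet i)

def VerticesFat (P : PrePolygon X k) (θ ν : ℝ) : Prop :=
  ∀ i : Fin k, ν * θ ≤ infDist (P.vertex i) (P.opp i)

theorem isFat_iff {P : PrePolygon X k} {θ σ ν : ℝ} :
    P.IsFat θ σ ν ↔ P.EdgesFat θ σ ∧ P.VerticesFat θ ν := Iff.rfl

theorem VerticesFat.le_dist {P : PrePolygon X k} {θ ν : ℝ} (h : P.VerticesFat θ ν)
    {i j : Fin k} (hji : j ≠ i) (hji' : finCycSucc j ≠ i) {q : X} (hq : q ∈ P.edgeSet j) :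
    ν * θ ≤ dist (P.vertex i) q :=
  (h i).trans (infDist_le_dist_of_mem (P.mem_opp.2 ⟨j, hji, hji', hq⟩))

theorem EdgesFat.split {P : PrePolygon X k} {θ σ : ℝ} (hP : P.IsGeodesicPolygon)
    (hF : P.EdgesFat θ σ) (hθσ : θ ≤ σ * θ) {i : Fin k} {c : ℝ} (hc₀ : 0 < c)
    (hc : c < P.len i) : (P.split i c).EdgesFat θ σ := by
  intro j p hp h₁ h₂
  rw [P.split_carrier hc₀.le hc.le]
  have hγ := hP.2 i
  have hC : P.edgeSet i ⊆ P.carrier := subset_iUnion P.edgeSet i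
  by_cases hj₁ : j = i.castSucc
  · subst hj₁
    rw [split_edgeSet_castSucc] at hp ⊢
    simp only [split_edge_castSucc, split_len_castSucc] at h₁ h₂
    obtain ⟨s, hs, rfl⟩ := hp
    exact hγ.le_infDist_diff_image_Icc hC le_rfl hc.le (Or.inr hc) hθσ (hF i) hs h₁ h₂
  by_cases hj₂ : j = i.succ
  · subst hj₂
    rw [split_edgeSet_succ] at hp ⊢
    simp only [split_edge_succ, split_len_succ, add_zero, add_sub_cancel] at h₁ h₂
    obtain ⟨s, hs, rfl⟩ := hp
    exact hγ.le_infDist_diff_image_Icc hC hc₀.le le_rfl (Or.inl hc₀) hθσ (hF i) hs h₁ h₂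
  rw [P.split_edgeSet_of_ne c hj₁ hj₂] at hp ⊢
  rw [P.split_edge_of_ne c hj₁ hj₂] at h₁ h₂
  rw [P.split_len_of_ne c hj₁ hj₂] at h₂
  exact hF _ p hp h₁ h₂

theorem VerticesFat.le_dist_split_point {P : PrePolygon X k} {θ ν : ℝ}
    (hP : P.IsGeodesicPolygon) (hF : P.VerticesFat θ ν) (hνθ : 0 ≤ ν * θ) {i : Fin k}
    (hmin : infDist (P.edge i 0) (P.edgeSet (finCycSucc i)) =
      dist (P.edge i 0) (P.edge i (P.len i)))
    (hlen : ν * θ ≤ P.len i) {j : Fin k} (hji : j ≠ i) {q : X} (hq : q ∈ P.edgeSet j) :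
    ν * θ / 2 ≤ dist (P.edge i (P.len i - ν * θ / 2)) q := by
  set c := P.len i - ν * θ / 2 with hc_def
  have hc₀ : 0 ≤ c := by linarith
  have hc : c ≤ P.len i := by linarith
  have hγ := hP.2 i
  have hy : P.edge i (P.len i) = P.vertex (finCycSucc i) := hP.1.2 i
  by_cases hjy : j = finCycSucc i
  · have hxq : P.len i ≤ dist (P.edge i 0) q := by
      have := infDist_le_dist_of_mem (x := P.edge i 0) (hjy ▸ hq)
      rwa [hmin, hγ.dist_eq_sub_s16 le_rfl (hP.1.1 i) le_rfl, sub_zero] at this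
    have hxv : dist (P.edge i 0) (P.edge i c) = c := by
      rw [hγ.dist_eq_sub_s16 le_rfl hc₀ hc, sub_zero]
    linarith [dist_triangle (P.edge i 0) (P.edge i c) q]
  · have hyq := hF.le_dist hjy (fun h => hji (finCycSucc_injective h)) hq
    have hvy : dist (P.vertex (finCycSucc i)) (P.edge i c) = P.len i - c := by
      rw [← hy, dist_comm, hγ.dist_eq_sub_s16 hc₀ hc le_rfl]
    linarith [dist_triangle (P.vertex (finCycSucc i)) (P.edge i c) q]

theorem VerticesFat.split {P : PrePolygon X k} {θ ν : ℝ} (hP : P.IsGeodesicPolygon)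
    (hF : P.VerticesFat θ ν) (hk : 2 ≤ k) (hνθ : 0 ≤ ν * θ) {i : Fin k}
    (hmin : infDist (P.edge i 0) (P.edgeSet (finCycSucc i)) =
      dist (P.edge i 0) (P.edge i (P.len i)))
    (hlen : ν * θ ≤ P.len i) : (P.split i (P.len i - ν * θ / 2)).VerticesFat θ (ν / 2) := by
  set c := P.len i - ν * θ / 2 with hc_def
  have hc₀ : 0 ≤ c := by linarith
  have hc : c ≤ P.len i := by linarith
  have hγ := hP.2 i
  have hy : P.edge i (P.len i) = P.vertex (finCycSucc i) := hP.1.2 i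
  intro m
  rw [le_infDist ((P.split i c).opp_nonempty (by omega) (P.split_len_nonneg hP.1.1 hc₀ hc) m)]
  intro q hq
  obtain ⟨j, hjm, hjm', hqj⟩ := (P.split i c).mem_opp.1 hq
  by_cases hm : m = i.succ
  · subst hm
    have hj : j ≠ i.castSucc := fun h => hjm' (h ▸ finCycSucc_castSucc i)
    rw [P.split_edgeSet_of_ne c hj hjm] at hqj
    rw [split_vertex_succ]
    calc ν / 2 * θ = ν * θ / 2 := by ring
      _ ≤ _ := hF.le_dist_split_point hP hνθ hmin hlen (Fin.predAbove_ne_self hj hjm) hqj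
  rw [P.split_vertex_of_ne_succ c hm]
  rcases nonadjacent_predAbove i hm hjm hjm' with ⟨h₁, h₂⟩ | ⟨rfl, hmy⟩ | ⟨rfl, rfl⟩
  · linarith [hF.le_dist h₁ h₂ (P.split_edgeSet_subset hc₀ hc j hqj)]
  · rw [split_edgeSet_castSucc] at hqj
    obtain ⟨t, ht, rfl⟩ := hqj
    rw [hmy, ← hy, dist_comm, hγ.dist_eq_sub_s16 ht.1 (ht.2.trans hc) le_rfl]
    linarith [ht.2]
  · rw [split_edgeSet_succ] at hqj
    obtain ⟨t, ht, rfl⟩ := hqj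
    rw [Fin.predAbove_castSucc_self, vertex, hγ.dist_eq_sub_s16 le_rfl (hc₀.trans ht.1) ht.2]
    linarith [ht.1]

end PrePolygon

theorem split_fat_polygon_general {k : ℕ} (P : PrePolygon X k) (hP : P.IsGeodesicPolygon)
    (θ ν : ℝ) (hθ : 0 < θ) (hν : 8 ≤ ν) (hfat : P.IsFat2 θ ν)
    (i : Fin k)
    (hmin : Metric.infDist (P.edge i 0) (P.edgeSet (finCycSucc i))
      = dist (P.edge i 0) (P.edge i (P.len i))) :
    (P.split i (P.len i - ν * θ / 2)).IsFat2 θ (ν / 2) := by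
  obtain ⟨hF₁, hF₂⟩ := PrePolygon.isFat_iff.1 hfat
  have hνθ : 0 < ν * θ := mul_pos (by linarith) hθ
  have hk : 3 ≤ k := P.three_le_of_opp_nonempty (nonempty_iff_ne_empty.2 fun h => by
    have := hF₂ i
    rw [h, infDist_empty] at this
    linarith)
  have hlen : ν * θ ≤ P.len i :=
    calc ν * θ ≤ infDist (P.vertex i) (P.opp i) := hF₂ i
      _ ≤ infDist (P.edge i 0) (P.edgeSet (finCycSucc i)) :=
        infDist_le_infDist_of_subset (P.edgeSet_finCycSucc_subset_opp hk i)
          (P.edgeSet_nonempty (hP.1.1 _))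
      _ = P.len i := by rw [hmin, (hP.2 i).dist_eq_sub_s16 le_rfl (hP.1.1 i) le_rfl, sub_zero]
  exact PrePolygon.isFat_iff.2 ⟨hF₁.split hP (by linarith) (by linarith) (by linarith),
    hF₂.split hP (by omega) hνθ.le hmin hlen⟩

/-- **Lemma.** Let `P` be a `(θ,ν)`-fat geodesic `k`-gon with consecutive edges
`[x,y]` (the `i`-th edge) and `[y,z]` (the next edge) satisfying
`dist(x,[y,z]) = dist(x,y)`.  Then the `(k+1)`-gon obtained by adding as a new vertex
the point `v ∈ [x,y]` with `dist(v,y) = νθ/2` is `(θ,ν/2)`-fat. -/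
theorem split_fat_polygon {k : ℕ} (P : PrePolygon X k) (hP : P.IsGeodesicPolygon)
    (θ ν : ℝ) (hθ : 0 < θ) (hν : 8 ≤ ν) (hfat : P.IsFat2 θ ν)
    (i : Fin k)
    (hmin : Metric.infDist (P.edge i 0) (P.edgeSet (finCycSucc i))
      = dist (P.edge i 0) (P.edge i (P.len i)))
    (hc : ν * θ / 2 ≤ P.len i) :
    (P.split i (P.len i - ν * θ / 2)).IsFat2 θ (ν / 2) :=
  split_fat_polygon_general P hP θ ν hθ hν hfat i hmin
end
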